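/- arXiv:2303.09512 — 7 statements merged into one kernel-verified Lean document; each statement's English description precedes it below -/
import Mathlib

section
/- For every d ≥ 3, neither Π_d ⊂ ℝ^{d-1} nor E_d ⊂ ℝ^{d-1} is a semialgebraic set. -/
open Finset

/-- A set `S ⊆ ℝ^m` is semialgebraic if it is a finite union of sets of the form
`{x : f(x) = 0, g₁(x) > 0, …, g_r(x) > 0}` with `f, gᵢ` real polynomials. -/
def IsSemialgebraic {m : ℕ} (S : Set (Fin m → ℝ)) : Prop :=
  ∃ (N : ℕ) (f : Fin N → MvPolynomial (Fin m) ℝ) (r : Fin N → ℕ)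
    (g : (i : Fin N) → Fin (r i) → MvPolynomial (Fin m) ℝ),
    S = ⋃ i : Fin N,
      {x : Fin m → ℝ | MvPolynomial.eval x (f i) = 0 ∧
        ∀ j : Fin (r i), 0 < MvPolynomial.eval x (g i j)}

/-- The `a`-th elementary symmetric polynomial in `n` variables, evaluated at `x`. -/
noncomputable def esymm (n a : ℕ) (x : Fin n → ℝ) : ℝ :=
  ∑ s ∈ Finset.powersetCard a Finset.univ, ∏ j ∈ s, x j

/-! ### Auxiliary lemmas -/

lemma polyEval_aeval {m : ℕ} (G : Fin m → Polynomial ℝ) (p : MvPolynomial (Fin m) ℝ) (t : ℝ) :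
    Polynomial.eval t (MvPolynomial.aeval G p)
      = MvPolynomial.eval (fun i => Polynomial.eval t (G i)) p := by
  induction p using MvPolynomial.induction_on with
  | C a => simp [MvPolynomial.aeval_C]
  | add p q hp hq => simp [hp, hq]
  | mul_X p i hp => simp [hp]

lemma esymm_const (n a : ℕ) (c : ℝ) : esymm n a (fun _ => c) = (n.choose a : ℝ) * c ^ a := by
  unfold esymm
  rw [Finset.sum_congr rfl (fun s hs => ?_), Finset.sum_const, Finset.card_powersetCard,
    Finset.card_univ, Fintype.card_fin, nsmul_eq_mul]
  rw [Finset.prod_const, (Finset.mem_powersetCard.mp hs).2]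

lemma choose_eq_prod (k a : ℕ) (ha : a ≤ k) (hk : 0 < k) :
    (k.choose a : ℝ) * (1/(k:ℝ)) ^ a
      = (∏ j ∈ Finset.range a, (1 - (j:ℝ)/(k:ℝ))) / (a.factorial : ℝ) := by
  have hk' : (0:ℝ) < (k:ℝ) := by positivity
  have hprod : ∏ j ∈ Finset.range a, ((k:ℝ) - (j:ℝ)) = (k.descFactorial a : ℝ) := by
    rw [Nat.descFactorial_eq_prod_range, Nat.cast_prod]
    refine Finset.prod_congr rfl fun j hj => ?_
    rw [Nat.cast_sub (le_of_lt (lt_of_lt_of_le (Finset.mem_range.mp hj) ha))]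
  have hdesc : (k.descFactorial a : ℝ) = (a.factorial : ℝ) * (k.choose a : ℝ) := by
    rw [← Nat.cast_mul, Nat.descFactorial_eq_factorial_mul_choose]
  have h2 : ∏ j ∈ Finset.range a, ((k:ℝ) - (j:ℝ))
      = (∏ j ∈ Finset.range a, (1 - (j:ℝ)/(k:ℝ))) * (k:ℝ)^a :=
    calc ∏ j ∈ Finset.range a, ((k:ℝ) - (j:ℝ))
        = ∏ j ∈ Finset.range a, ((1 - (j:ℝ)/(k:ℝ)) * (k:ℝ)) :=
          Finset.prod_congr rfl (fun j _ => by field_simp)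
      _ = (∏ j ∈ Finset.range a, (1 - (j:ℝ)/(k:ℝ))) * ∏ j ∈ Finset.range a, (k:ℝ) :=
          Finset.prod_mul_distrib
      _ = _ := by rw [Finset.prod_const, Finset.card_range]
  have hfa : (a.factorial : ℝ) ≠ 0 := by positivity
  have hka : ((k:ℝ))^a ≠ 0 := by positivity
  rw [eq_div_iff hfa]
  have := hprod.symm.trans h2
  rw [hdesc] at this
  field_simp at this ⊢
  rw [this, mul_assoc, ← mul_pow, mul_one_div_cancel (ne_of_gt hk'), one_pow, mul_one]

set_option maxHeartbeats 2000000 in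
/-- Core quantitative lemma: if `1/(K+1) < t < 1/K`, points of the simplex cannot have
`(p₂, p₃)` close to `(t, t²)`. -/
lemma core (t : ℝ) (K : ℕ) (hK : 1 ≤ K) (h1 : 1/((K:ℝ)+1) < t) (h2 : t < 1/(K:ℝ)) :
    ∃ ε > 0, ∀ n : ℕ, ∀ x : Fin n → ℝ, x ∈ stdSimplex ℝ (Fin n) →
      ε ≤ |(∑ j, x j ^ 2) - t| ∨ ε ≤ |(∑ j, x j ^ 3) - t ^ 2| := by
  have hKR : (1:ℝ) ≤ (K:ℝ) := by exact_mod_cast hK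
  have hKpos : (0:ℝ) < (K:ℝ) := by linarith
  have ht0 : 0 < t := lt_trans (by positivity) h1
  have ht1 : t < 1 := lt_of_lt_of_le h2 (by rw [div_le_one hKpos]; linarith)
  obtain ⟨ρ, hρm1, hρm2, hρ⟩ : ∃ ρ : ℝ, ρ ≤ t - 1/((K:ℝ)+1) ∧ ρ ≤ 1/(K:ℝ) - t ∧ 0 < ρ :=
    ⟨min (t - 1/((K:ℝ)+1)) (1/(K:ℝ) - t), min_le_left _ _, min_le_right _ _,
      lt_min (by linarith) (by linarith)⟩
  have hρt : ρ < t := by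
    have : 0 < 1/((K:ℝ)+1) := by positivity
    linarith
  have hρ1 : ρ ≤ 1 := by
    have : 1/(K:ℝ) ≤ 1 := by rw [div_le_one hKpos]; linarith
    linarith
  -- margin facts
  have hmargin1 : (K:ℝ) * t ≤ 1 - (K:ℝ)*ρ := by
    have h3 : (K:ℝ) * (ρ + t) ≤ (K:ℝ) * (1/(K:ℝ)) :=
      mul_le_mul_of_nonneg_left (by linarith) (le_of_lt hKpos)
    rw [mul_one_div, div_self (ne_of_gt hKpos)] at h3
    nlinarith
  have hmargin2 : 1 + ((K:ℝ)+1)*ρ ≤ ((K:ℝ)+1) * t := by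
    have hK1 : (0:ℝ) < (K:ℝ)+1 := by linarith
    have h3 : ((K:ℝ)+1) * (1/((K:ℝ)+1)) ≤ ((K:ℝ)+1) * (t - ρ) :=
      mul_le_mul_of_nonneg_left (by linarith) (le_of_lt hK1)
    rw [mul_one_div, div_self (ne_of_gt hK1)] at h3
    nlinarith
  obtain ⟨η, hηdef, hη⟩ : ∃ η : ℝ, η = ρ * t / 20 ∧ 0 < η := ⟨_, rfl, by positivity⟩
  obtain ⟨δ, hδdef, hδ⟩ : ∃ δ : ℝ, δ = η^2 * ρ / 4 ∧ 0 < δ := ⟨_, rfl, by positivity⟩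
  obtain ⟨ε, hερ, hεt, hεδ, hεpos⟩ :
      ∃ ε : ℝ, ε ≤ ρ/2 ∧ ε ≤ t/2 ∧ ε ≤ δ/3 ∧ 0 < ε :=
    ⟨min (min (ρ/2) (t/2)) (δ/3), le_trans (min_le_left _ _) (min_le_left _ _),
      le_trans (min_le_left _ _) (min_le_right _ _), min_le_right _ _, by positivity⟩
  refine ⟨ε, hεpos, ?_⟩
  intro n x hx
  by_contra hcon
  push_neg at hcon
  obtain ⟨hc2, hc3⟩ := hcon
  obtain ⟨hxpos, hxsum⟩ := hx
  set u : ℝ := ∑ j, x j ^ 2 with hudef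
  clear_value u
  have habs2 := abs_lt.mp hc2
  have habs3 := abs_lt.mp hc3
  have hut : t/2 ≤ u := by linarith [habs2.1]
  have hu1 : u < t + ρ/2 := by linarith [habs2.2]
  have hu2 : t - ρ/2 < u := by linarith [habs2.1]
  have hupos : 0 < u := by linarith
  -- margin: every natural multiple of u is far from 1
  have hm : ∀ a : ℕ, ρ/2 < |(a:ℝ) * u - 1| := by
    intro a
    rcases le_or_gt a K with hle | hlt
    · have haK : (a:ℝ) ≤ (K:ℝ) := by exact_mod_cast hle
      have h3 : (a:ℝ) * u ≤ (K:ℝ) * u := by nlinarith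
      have h4 : (K:ℝ) * u < (K:ℝ) * (t + ρ/2) := by nlinarith
      have h6 : (a:ℝ) * u < 1 - ρ/2 := by nlinarith
      have h7 : 1 - (a:ℝ)*u ≤ |(a:ℝ)*u - 1| := by rw [abs_sub_comm]; exact le_abs_self _
      linarith
    · have haK : (K:ℝ) + 1 ≤ (a:ℝ) := by exact_mod_cast hlt
      have h3 : ((K:ℝ)+1) * u ≤ (a:ℝ) * u := by nlinarith
      have h4 : ((K:ℝ)+1) * (t - ρ/2) < ((K:ℝ)+1) * u := by nlinarith
      have h5 : 1 + ρ/2 < (a:ℝ) * u := by nlinarith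
      have h7 : (a:ℝ)*u - 1 ≤ |(a:ℝ)*u - 1| := le_abs_self _
      linarith
  -- the variance-like gap is small
  have hgap_eq : ∑ j, x j * (x j - u)^2 = (∑ j, x j ^ 3) - u^2 := by
    have hterm : ∀ j : Fin n, x j * (x j - u)^2
        = x j ^ 3 - 2*u*(x j ^2) + u^2 * x j := fun j => by ring
    rw [Finset.sum_congr rfl (fun j _ => hterm j)]
    rw [Finset.sum_add_distrib, Finset.sum_sub_distrib, ← Finset.mul_sum, ← Finset.mul_sum,
      ← hudef, hxsum]
    ring
  have hgap_lt : ∑ j, x j * (x j - u)^2 < δ := by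
    rw [hgap_eq]
    have htε : 0 < t - ε := by linarith
    have hu_gt : t - ε < u := by linarith [habs2.1]
    have husq : (t - ε)^2 < u^2 := by nlinarith
    have hεt1 : ε * t ≤ ε := by nlinarith
    have hexp : (t - ε)^2 = t^2 - 2*(ε*t) + ε^2 := by ring
    nlinarith [sq_nonneg ε, habs3.2]
  -- split support
  set A : Finset (Fin n) := {i ∈ Finset.univ | |x i - u| < η} with hAdef
  have hηu : η < u / 2 := by rw [hηdef]; nlinarith
  have huη : 0 < u - η := by linarith
  -- mass outside A is small
  have houtterm : ∀ i ∈ Finset.univ \ A, η^2 * x i ≤ x i * (x i - u)^2 := by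
    intro i hi
    rw [Finset.mem_sdiff, hAdef, Finset.mem_filter, not_and] at hi
    have hηle : η ≤ |x i - u| := not_lt.mp (hi.2 hi.1)
    have : η^2 ≤ (x i - u)^2 := by
      rw [← sq_abs (x i - u)]
      exact pow_le_pow_left₀ (le_of_lt hη) hηle 2
    nlinarith [hxpos i]
  have hout : ∑ i ∈ Finset.univ \ A, x i ≤ ρ/4 := by
    have h1' : η^2 * ∑ i ∈ Finset.univ \ A, x i ≤ ∑ i ∈ Finset.univ \ A, x i * (x i - u)^2 := by
      rw [Finset.mul_sum]
      exact Finset.sum_le_sum houtterm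
    have h2' : ∑ i ∈ Finset.univ \ A, x i * (x i - u)^2 ≤ ∑ j, x j * (x j - u)^2 :=
      Finset.sum_le_sum_of_subset_of_nonneg (Finset.sdiff_subset)
        (fun j _ _ => mul_nonneg (hxpos j) (sq_nonneg _))
    have h3' : η^2 * ∑ i ∈ Finset.univ \ A, x i < δ := lt_of_le_of_lt (le_trans h1' h2') hgap_lt
    have h4' : ∑ i ∈ Finset.univ \ A, x i < δ / η^2 := by
      rw [lt_div_iff₀ (by positivity)]
      linarith [h3']
    have hδη : δ / η^2 = ρ/4 := by rw [hδdef]; field_simp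
    linarith [h4', hδη.le]
  -- mass inside A
  have hsplit := Finset.sum_sdiff (Finset.filter_subset (fun i => |x i - u| < η) Finset.univ)
    (f := fun i => x i)
  have hmassA : (1:ℝ) - ρ/4 ≤ ∑ i ∈ A, x i := by
    rw [hxsum] at hsplit
    have : ∑ i ∈ A, x i = 1 - ∑ i ∈ Finset.univ \ A, x i := by rw [← hsplit]; ring
    rw [this]
    linarith
  have hAub : ∑ i ∈ A, x i ≤ (A.card:ℝ) * (u + η) := by
    calc ∑ i ∈ A, x i ≤ ∑ _i ∈ A, (u + η) := Finset.sum_le_sum (fun i hi => by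
          rw [hAdef, Finset.mem_filter] at hi
          have := abs_lt.mp hi.2
          linarith [this.2])
      _ = (A.card : ℝ) * (u + η) := by rw [Finset.sum_const, nsmul_eq_mul]
  have hAlb : (A.card:ℝ) * (u - η) ≤ ∑ i ∈ A, x i := by
    calc (A.card : ℝ) * (u - η) = ∑ _i ∈ A, (u - η) := by rw [Finset.sum_const, nsmul_eq_mul]
      _ ≤ ∑ i ∈ A, x i := Finset.sum_le_sum (fun i hi => by
          rw [hAdef, Finset.mem_filter] at hi
          have := abs_lt.mp hi.2
          linarith [this.1])
  have hmA1 : ∑ i ∈ A, x i ≤ 1 := by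
    rw [← hxsum]
    exact Finset.sum_le_sum_of_subset_of_nonneg (Finset.filter_subset _ _)
      (fun j _ _ => hxpos j)
  have haub : (A.card:ℝ) * (u - η) ≤ 1 := le_trans hAlb hmA1
  have hanneg : (0:ℝ) ≤ (A.card:ℝ) := Nat.cast_nonneg _
  have haη : (A.card:ℝ) * η ≤ ρ/5 := by
    have key : 5*η ≤ ρ*(u-η) := by rw [hηdef]; nlinarith
    nlinarith [mul_le_mul_of_nonneg_right haub (le_of_lt hη)]
  -- contradiction with margin
  have hfinal : |(A.card:ℝ) * u - 1| ≤ 9*ρ/20 := by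
    rw [abs_le]
    constructor
    · nlinarith
    · nlinarith
  have := hm A.card
  linarith [hρ]

lemma eval_esymm (n a : ℕ) (x : Fin n → ℝ) :
    MvPolynomial.eval x (MvPolynomial.esymm (Fin n) ℝ a) = esymm n a x := by
  unfold esymm MvPolynomial.esymm
  rw [map_sum]
  exact Finset.sum_congr rfl fun s _ => by rw [map_prod]; simp

lemma eval_psum (n a : ℕ) (x : Fin n → ℝ) :
    MvPolynomial.eval x (MvPolynomial.psum (Fin n) ℝ a) = ∑ j, x j ^ a := by
  unfold MvPolynomial.psum
  rw [map_sum]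
  simp

lemma p2_identity (n : ℕ) (x : Fin n → ℝ) (hs : ∑ j, x j = 1) :
    ∑ j, x j ^ 2 = 1 - 2 * esymm n 2 x := by
  have h := MvPolynomial.psum_eq_mul_esymm_sub_sum (Fin n) ℝ 2 (by norm_num)
  have h2 := congrArg (MvPolynomial.eval x) h
  rw [show (Finset.HasAntidiagonal.antidiagonal 2).filter (fun a => a.1 ∈ Set.Ioo 0 2) = {(1,1)} from by decide]
    at h2
  simp only [Finset.sum_singleton, map_sub, map_mul, map_pow, map_neg, map_one, map_natCast,
    eval_esymm, eval_psum] at h2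
  have he1 : esymm n 1 x = 1 := by
    rw [← eval_esymm, MvPolynomial.esymm_one, map_sum]
    simpa using hs
  rw [he1] at h2
  rw [show ∑ j, x j ^ 1 = 1 by simpa using hs] at h2
  rw [h2]; ring

lemma p3_identity (n : ℕ) (x : Fin n → ℝ) (hs : ∑ j, x j = 1) :
    ∑ j, x j ^ 3 = 3 * esymm n 3 x + (∑ j, x j ^ 2) - esymm n 2 x := by
  have h := MvPolynomial.psum_eq_mul_esymm_sub_sum (Fin n) ℝ 3 (by norm_num)
  have h2 := congrArg (MvPolynomial.eval x) h
  rw [show (Finset.HasAntidiagonal.antidiagonal 3).filter (fun a => a.1 ∈ Set.Ioo 0 3) = {(1,2),(2,1)} from by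
    decide] at h2
  rw [Finset.sum_insert (by decide), Finset.sum_singleton] at h2
  simp only [map_sub, map_add, map_mul, map_pow, map_neg, map_one, map_natCast,
    eval_esymm, eval_psum] at h2
  have he1 : esymm n 1 x = 1 := by
    rw [← eval_esymm, MvPolynomial.esymm_one, map_sum]
    simpa using hs
  rw [he1] at h2
  rw [show ∑ j, x j ^ 1 = 1 by simpa using hs] at h2
  rw [h2]; ring

/-- Key skeleton: if a polynomial curve `γ(t) = (G i).eval t` hits `U` at every `t = 1/k`
(`k ≥ d`) but avoids `closure U` on each interval `(1/(k+1), 1/k)`, then `closure U` is not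
semialgebraic. -/
lemma key {m : ℕ} (U : Set (Fin m → ℝ)) (d : ℕ) (hd : 3 ≤ d)
    (G : Fin m → Polynomial ℝ)
    (hmem : ∀ k : ℕ, d ≤ k → (fun i => (G i).eval (1/(k:ℝ))) ∈ U)
    (hnot : ∀ k : ℕ, d ≤ k → ∀ t : ℝ, 1/((k:ℝ)+1) < t → t < 1/(k:ℝ) →
      (fun i => (G i).eval t) ∉ closure U) :
    ¬ IsSemialgebraic (closure U) := by
  rintro ⟨N, f, r, g, hS⟩
  set γ : ℝ → (Fin m → ℝ) := fun t i => (G i).eval t with hγ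
  -- the pullback pieces
  set F : Fin N → Polynomial ℝ := fun i => MvPolynomial.aeval G (f i) with hF
  set Gg : (i : Fin N) → Fin (r i) → Polynomial ℝ := fun i j => MvPolynomial.aeval G (g i j)
    with hGg
  set T : Fin N → Set ℝ := fun i => {t | (F i).eval t = 0 ∧ ∀ j, 0 < (Gg i j).eval t} with hT
  have hTiff : ∀ t : ℝ, γ t ∈ closure U ↔ ∃ i, t ∈ T i := by
    intro t
    rw [hS]
    simp only [Set.mem_iUnion, Set.mem_setOf_eq, hT, hF, hGg, polyEval_aeval]
    exact Iff.rfl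
  -- infinitely many reciprocal points on the curve
  set S' : Set ℝ := Set.range (fun k : ℕ => 1/(((k+d:ℕ)):ℝ)) with hS'
  have hinj : Function.Injective (fun k : ℕ => 1/(((k+d:ℕ)):ℝ)) := by
    intro a b hab
    simp only [one_div] at hab
    have : ((a+d:ℕ):ℝ) = ((b+d:ℕ):ℝ) := inv_injective hab
    have := Nat.cast_injective this
    omega
  have hS'inf : S'.Infinite := Set.infinite_range_of_injective hinj
  have hS'sub : ∀ s ∈ S', ∃ i, s ∈ T i := by
    rintro s ⟨k, rfl⟩
    exact (hTiff _).mp (subset_closure (hmem (k+d) (by omega)))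
  -- some piece contains infinitely many of them
  have hpigeon : ∃ i, (S' ∩ T i).Infinite := by
    by_contra hcon
    push_neg at hcon
    have : S' ⊆ ⋃ i, (S' ∩ T i) := by
      intro s hs
      obtain ⟨i, hi⟩ := hS'sub s hs
      exact Set.mem_iUnion.mpr ⟨i, hs, hi⟩
    exact hS'inf (Set.Finite.subset (Set.finite_iUnion hcon) this)
  obtain ⟨i, hi⟩ := hpigeon
  -- its equality polynomial vanishes identically
  have hF0 : F i = 0 := by
    by_contra hFne
    have hfin : {t : ℝ | (F i).IsRoot t}.Finite := Polynomial.finite_setOf_isRoot hFne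
    refine hi (hfin.subset ?_)
    rintro t ⟨-, ht⟩
    exact ht.1
  obtain ⟨t0, ht0S, ht0T⟩ := hi.nonempty
  obtain ⟨k', hk'⟩ := ht0S
  set k0 : ℕ := k' + d with hk0
  have hk0d : d ≤ k0 := by omega
  have hk0pos : (0:ℝ) < (k0:ℝ) := by
    have : 0 < k0 := by omega
    exact_mod_cast this
  -- a whole interval to the left of t0 lies in the piece
  have hWopen : IsOpen (⋂ j, {t : ℝ | 0 < (Gg i j).eval t}) :=
    isOpen_iInter_of_finite fun j => isOpen_lt continuous_const (Polynomial.continuous _)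
  have ht0W : t0 ∈ ⋂ j, {t : ℝ | 0 < (Gg i j).eval t} :=
    Set.mem_iInter.mpr ht0T.2
  obtain ⟨δ, hδ, hball⟩ := Metric.isOpen_iff.mp hWopen t0 ht0W
  -- pick t1 in (1/(k0+1), 1/k0) within δ of t0
  have ht0v : t0 = 1/(k0:ℝ) := hk'.symm
  have hlt : 1/((k0:ℝ)+1) < t0 := by
    rw [ht0v]
    apply one_div_lt_one_div_of_lt hk0pos
    linarith
  set b : ℝ := max (1/((k0:ℝ)+1)) (t0 - δ/2) with hb
  have hblt : b < t0 := max_lt hlt (by linarith)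
  set t1 : ℝ := (b + t0)/2 with ht1
  have hbt1 : b < t1 := by rw [ht1]; linarith
  have ht1t0 : t1 < t0 := by rw [ht1]; linarith
  have ht1l : 1/((k0:ℝ)+1) < t1 := lt_of_le_of_lt (le_max_left _ _) hbt1
  have ht1r : t1 < 1/(k0:ℝ) := by rw [← ht0v]; exact ht1t0
  have ht1δ : dist t1 t0 < δ := by
    rw [Real.dist_eq, abs_sub_comm, abs_of_nonneg (by linarith)]
    have : t0 - δ/2 ≤ b := le_max_right _ _
    have h2 : t0 - t1 < t0 - b := by linarith
    linarith
  have ht1W := hball (Metric.mem_ball.mpr ht1δ)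
  have ht1T : t1 ∈ T i := by
    refine ⟨by rw [hF0]; simp, fun j => ?_⟩
    exact Set.mem_iInter.mp ht1W j
  have : γ t1 ∈ closure U := (hTiff t1).mpr ⟨i, ht1T⟩
  exact hnot k0 hk0d t1 ht1l ht1r this

lemma flat_mem (k : ℕ) (hk : 0 < k) : (fun _ => 1/(k:ℝ)) ∈ stdSimplex ℝ (Fin k) := by
  constructor
  · intro i
    positivity
  · rw [Finset.sum_const, Finset.card_univ, Fintype.card_fin, nsmul_eq_mul]
    field_simp

/-- non-membership of curve points at parameters strictly between consecutive reciprocals,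
power sum version -/
lemma notP (d : ℕ) (hd : 3 ≤ d) (k : ℕ) (hk : 3 ≤ k) (t : ℝ) (h1 : 1/((k:ℝ)+1) < t)
    (h2 : t < 1/(k:ℝ)) :
    (fun i : Fin (d-1) => t ^ ((i:ℕ)+1)) ∉ closure (⋃ n : ℕ, ⋃ (_ : d ≤ n),
      (fun (x : Fin n → ℝ) (i : Fin (d - 1)) => ∑ j, x j ^ ((i : ℕ) + 2)) ''
        stdSimplex ℝ (Fin n)) := by
  obtain ⟨ε, hε, hcore⟩ := core t k (by omega) h1 h2
  intro hcl
  set i0 : Fin (d-1) := ⟨0, by omega⟩ with hi0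
  set i1 : Fin (d-1) := ⟨1, by omega⟩ with hi1
  set V : Set (Fin (d-1) → ℝ) :=
    {y | |y i0 - t| < ε} ∩ {y | |y i1 - t^2| < ε} with hV
  have hVopen : IsOpen V :=
    (isOpen_lt (((continuous_apply i0).sub continuous_const).abs) continuous_const).inter
      (isOpen_lt (((continuous_apply i1).sub continuous_const).abs) continuous_const)
  have hVmem : (fun i : Fin (d-1) => t ^ ((i:ℕ)+1)) ∈ V := by
    constructor
    · show |t ^ ((i0:ℕ)+1) - t| < ε
      rw [hi0]
      simpa using hε
    · show |t ^ ((i1:ℕ)+1) - t^2| < ε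
      rw [hi1]
      simpa using hε
  obtain ⟨y, hyV, hyU⟩ := mem_closure_iff.mp hcl V hVopen hVmem
  simp only [Set.mem_iUnion] at hyU
  obtain ⟨n, hn, x, hx, hxy⟩ := hyU
  have hy0 : y i0 = ∑ j, x j ^ 2 := by rw [← hxy]
  have hy1 : y i1 = ∑ j, x j ^ 3 := by rw [← hxy]
  obtain ⟨hyV0, hyV1⟩ := hyV
  rcases hcore n x hx with h | h
  · rw [← hy0] at h
    exact absurd hyV0 (not_lt.mpr h)
  · rw [← hy1] at h
    exact absurd hyV1 (not_lt.mpr h)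

/-- the curve polynomials for the elementary symmetric version -/
noncomputable def GE (d : ℕ) : Fin (d-1) → Polynomial ℝ := fun i =>
  Polynomial.C ((((i:ℕ)+2).factorial : ℝ))⁻¹ *
    ∏ j ∈ Finset.range ((i:ℕ)+2), (1 - Polynomial.C (j:ℝ) * Polynomial.X)

lemma GE_eval (d : ℕ) (i : Fin (d-1)) (t : ℝ) :
    (GE d i).eval t
      = ((((i:ℕ)+2).factorial : ℝ))⁻¹ * ∏ j ∈ Finset.range ((i:ℕ)+2), (1 - (j:ℝ)*t) := by
  simp [GE, Polynomial.eval_prod]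

lemma GE_eval0 (d : ℕ) (hd : 3 ≤ d) (t : ℝ) :
    (GE d ⟨0, by omega⟩).eval t = (1 - t)/2 := by
  rw [GE_eval]
  show ((2:ℕ).factorial : ℝ)⁻¹ * ∏ j ∈ Finset.range 2, (1 - (j:ℝ)*t) = (1-t)/2
  rw [Finset.prod_range_succ, Finset.prod_range_one]
  norm_num [Nat.factorial]
  ring

lemma GE_eval1 (d : ℕ) (hd : 3 ≤ d) (t : ℝ) :
    (GE d ⟨1, by omega⟩).eval t = (1 - t)*(1 - 2*t)/6 := by
  rw [GE_eval]
  show ((3:ℕ).factorial : ℝ)⁻¹ * ∏ j ∈ Finset.range 3, (1 - (j:ℝ)*t) = (1-t)*(1-2*t)/6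
  rw [Finset.prod_range_succ, Finset.prod_range_succ, Finset.prod_range_one]
  norm_num [Nat.factorial]
  ring

/-- non-membership, elementary symmetric version -/
lemma notE (d : ℕ) (hd : 3 ≤ d) (k : ℕ) (hk : 3 ≤ k) (t : ℝ)
    (h1 : 1/((k:ℝ)+1) < t) (h2 : t < 1/(k:ℝ)) :
    (fun i : Fin (d-1) => (GE d i).eval t) ∉ closure (⋃ n : ℕ, ⋃ (_ : d ≤ n),
      (fun (x : Fin n → ℝ) (i : Fin (d - 1)) => esymm n ((i : ℕ) + 2) x) ''
        stdSimplex ℝ (Fin n)) := by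
  obtain ⟨ε, hε, hcore⟩ := core t k (by omega) h1 h2
  intro hcl
  set i0 : Fin (d-1) := ⟨0, by omega⟩ with hi0
  set i1 : Fin (d-1) := ⟨1, by omega⟩ with hi1
  set c2 : ℝ := (1 - t)/2 with hc2
  set c3 : ℝ := (1 - t)*(1 - 2*t)/6 with hc3
  set V : Set (Fin (d-1) → ℝ) :=
    {y | |y i0 - c2| < ε/7} ∩ {y | |y i1 - c3| < ε/7} with hV
  have hVopen : IsOpen V :=
    (isOpen_lt (((continuous_apply i0).sub continuous_const).abs) continuous_const).inter
      (isOpen_lt (((continuous_apply i1).sub continuous_const).abs) continuous_const)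
  have hVmem : (fun i : Fin (d-1) => (GE d i).eval t) ∈ V := by
    constructor
    · show |(GE d i0).eval t - c2| < ε/7
      rw [hi0, GE_eval0 d hd, hc2]
      simpa using by positivity
    · show |(GE d i1).eval t - c3| < ε/7
      rw [hi1, GE_eval1 d hd, hc3]
      simpa using by positivity
  obtain ⟨y, hyV, hyU⟩ := mem_closure_iff.mp hcl V hVopen hVmem
  simp only [Set.mem_iUnion] at hyU
  obtain ⟨n, hn, x, hx, hxy⟩ := hyU
  have hy0 : y i0 = esymm n 2 x := by rw [← hxy]
  have hy1 : y i1 = esymm n 3 x := by rw [← hxy]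
  obtain ⟨hyV0, hyV1⟩ := hyV
  have he2 : |esymm n 2 x - c2| < ε/7 := by rw [← hy0]; exact hyV0
  have he3 : |esymm n 3 x - c3| < ε/7 := by rw [← hy1]; exact hyV1
  rw [abs_lt] at he2 he3
  have hp2 := p2_identity n x hx.2
  have hp3 := p3_identity n x hx.2
  have key2 : (∑ j, x j ^ 2) - t = -2*(esymm n 2 x - c2) := by rw [hp2, hc2]; ring
  have key3 : (∑ j, x j ^ 3) - t^2 = 3*(esymm n 3 x - c3) - 3*(esymm n 2 x - c2) := by
    rw [hp3, hp2, hc3, hc2]; ring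
  have hb2 : |(∑ j, x j ^ 2) - t| < ε := by
    rw [key2, abs_lt]; constructor <;> linarith [he2.1, he2.2, hε]
  have hb3 : |(∑ j, x j ^ 3) - t^2| < ε := by
    rw [key3, abs_lt]; constructor <;> linarith [he2.1, he2.2, he3.1, he3.2, hε]
  rcases hcore n x hx with h | h
  · exact absurd hb2 (not_lt.mpr h)
  · exact absurd hb3 (not_lt.mpr h)

lemma memP (d : ℕ) (hd : 3 ≤ d) (k : ℕ) (hk : d ≤ k) :
    (fun i : Fin (d-1) => (Polynomial.X ^ ((i:ℕ)+1) : Polynomial ℝ).eval (1/(k:ℝ))) ∈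
      ⋃ n : ℕ, ⋃ (_ : d ≤ n),
      (fun (x : Fin n → ℝ) (i : Fin (d - 1)) => ∑ j, x j ^ ((i : ℕ) + 2)) ''
        stdSimplex ℝ (Fin n) := by
  have hk0 : 0 < k := by omega
  have hkR : (0:ℝ) < (k:ℝ) := by exact_mod_cast hk0
  refine Set.mem_iUnion.mpr ⟨k, Set.mem_iUnion.mpr ⟨hk, ⟨fun _ => 1/(k:ℝ), flat_mem k hk0, ?_⟩⟩⟩
  funext i
  show ∑ _j : Fin k, (1/(k:ℝ)) ^ ((i:ℕ)+2) = _
  rw [Finset.sum_const, Finset.card_univ, Fintype.card_fin, nsmul_eq_mul,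
    Polynomial.eval_pow, Polynomial.eval_X]
  rw [show (i:ℕ)+2 = ((i:ℕ)+1)+1 from rfl, pow_succ]
  field_simp

lemma memE (d : ℕ) (hd : 3 ≤ d) (k : ℕ) (hk : d ≤ k) :
    (fun i : Fin (d-1) => (GE d i).eval (1/(k:ℝ))) ∈
      ⋃ n : ℕ, ⋃ (_ : d ≤ n),
      (fun (x : Fin n → ℝ) (i : Fin (d - 1)) => esymm n ((i : ℕ) + 2) x) ''
        stdSimplex ℝ (Fin n) := by
  have hk0 : 0 < k := by omega
  refine Set.mem_iUnion.mpr ⟨k, Set.mem_iUnion.mpr ⟨hk, ⟨fun _ => 1/(k:ℝ), flat_mem k hk0, ?_⟩⟩⟩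
  funext i
  show esymm k ((i:ℕ)+2) (fun _ => 1/(k:ℝ)) = _
  have ha : (i:ℕ)+2 ≤ k := by have := i.isLt; omega
  rw [esymm_const, choose_eq_prod k _ ha hk0, GE_eval, div_eq_inv_mul]
  congr 1
  exact Finset.prod_congr rfl fun j _ => by rw [mul_one_div]

/-- **Corollary 2.19.** For every `d ≥ 3`, neither the limit Vandermonde cell
`Π_d = closure (⋃_{n ≥ d} (p₂,…,p_d)(Δ_{n-1}))` nor the limit set
`E_d = closure (⋃_{n ≥ d} (e₂,…,e_d)(Δ_{n-1}))` is semialgebraic. -/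
theorem limit_cells_not_semialgebraic (d : ℕ) (hd : 3 ≤ d) :
    ¬ IsSemialgebraic (closure (⋃ n : ℕ, ⋃ (_ : d ≤ n),
        (fun (x : Fin n → ℝ) (i : Fin (d - 1)) => ∑ j, x j ^ ((i : ℕ) + 2)) ''
          stdSimplex ℝ (Fin n))) ∧
    ¬ IsSemialgebraic (closure (⋃ n : ℕ, ⋃ (_ : d ≤ n),
        (fun (x : Fin n → ℝ) (i : Fin (d - 1)) => esymm n ((i : ℕ) + 2) x) ''
          stdSimplex ℝ (Fin n))) := by
  constructor
  · refine key _ d hd (fun i => Polynomial.X ^ ((i:ℕ)+1)) (memP d hd) ?_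
    intro k hk t h1 h2
    have h := notP d hd k (by omega) t h1 h2
    simpa only [Polynomial.eval_pow, Polynomial.eval_X] using h
  · exact key _ d hd (GE d) (memE d hd)
      (fun k hk t h1 h2 => notE d hd k (by omega) t h1 h2)
end

section
/- For every d ≥ 2, Π_d equals the closure of ⋃_{n≥d} {(p_2(x),…,p_d(x)) : x ∈ Δ̃_n}, where Δ̃_n is the sub-probability simplex. That is, the closed limits of the images of the probability simplices and of the sub-probability simplices under the Vandermonde map (p_2,…,p_d) coincide. -/
/-- The sub-probability simplex `Δ̃_n`. -/
def subSimplex (n : ℕ) : Set (Fin n → ℝ) :=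
  {x | (∀ i, 0 ≤ x i) ∧ (∑ i, x i) ≤ 1}

/-- **Lemma 4.2.** For every `d ≥ 2`, the limit Vandermonde cell
`Π_d = closure (⋃_{n ≥ d} (p₂,…,p_d)(Δ_{n-1}))` coincides with the closed limit of the
images of the sub-probability simplices, `closure (⋃_{n ≥ d} (p₂,…,p_d)(Δ̃_n))`. -/
theorem limit_of_simplex_images_eq_limit_of_subsimplex_images (d : ℕ) (hd : 2 ≤ d) :
    closure (⋃ n : ℕ, ⋃ (_ : d ≤ n),
        (fun (x : Fin n → ℝ) (i : Fin (d - 1)) => ∑ j, x j ^ ((i : ℕ) + 2)) ''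
          stdSimplex ℝ (Fin n)) =
      closure (⋃ n : ℕ, ⋃ (_ : d ≤ n),
        (fun (x : Fin n → ℝ) (i : Fin (d - 1)) => ∑ j, x j ^ ((i : ℕ) + 2)) ''
          subSimplex n) := by
  apply subset_antisymm
  · apply closure_mono
    refine Set.iUnion_mono fun n => Set.iUnion_mono fun hn => Set.image_mono ?_
    intro x hx
    exact ⟨hx.1, le_of_eq hx.2⟩
  · refine closure_minimal ?_ isClosed_closure
    rintro p hp
    simp only [Set.mem_iUnion, Set.mem_image] at hp
    obtain ⟨n, hn, x, hx, rfl⟩ := hp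
    set t : ℝ := 1 - ∑ j, x j with ht
    have ht0 : 0 ≤ t := by
      have := hx.2
      simp only [ht]
      linarith [hx.2]
    -- the approximating sequence: append m+1 equal coordinates of value t/(m+1)
    have key : ∀ (m : ℕ) (i : Fin (d - 1)),
        (∑ j : Fin (n + (m + 1)),
            (Fin.append x (fun _ : Fin (m + 1) => t / (m + 1))) j ^ ((i : ℕ) + 2))
          = (∑ j, x j ^ ((i : ℕ) + 2)) + (m + 1 : ℝ) * (t / (m + 1)) ^ ((i : ℕ) + 2) := by
      intro m i
      rw [Fin.sum_univ_add]
      simp [Fin.append_left, Fin.append_right, Finset.sum_const, nsmul_eq_mul]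
    refine mem_closure_of_tendsto (b := Filter.atTop) (f := fun m : ℕ =>
        (fun (y : Fin (n + (m + 1)) → ℝ) (i : Fin (d - 1)) => ∑ j, y j ^ ((i : ℕ) + 2))
          (Fin.append x fun _ => t / (m + 1))) ?_ ?_
    · rw [tendsto_pi_nhds]
      intro i
      simp only
      have hrw : ∀ m : ℕ,
          (∑ j : Fin (n + (m + 1)),
              (Fin.append x (fun _ : Fin (m + 1) => t / (m + 1))) j ^ ((i : ℕ) + 2))
            = (∑ j, x j ^ ((i : ℕ) + 2)) + (t / (m + 1)) ^ ((i : ℕ) + 1) * t := by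
        intro m
        rw [key m i]
        have hm : ((m : ℝ) + 1) ≠ 0 := by positivity
        rw [show (i : ℕ) + 2 = ((i : ℕ) + 1) + 1 by ring, pow_succ, mul_comm ((m : ℝ) + 1),
          mul_assoc, div_mul_cancel₀ t hm]
      simp only [hrw]
      have h1 : Filter.Tendsto (fun m : ℕ => t / (m + 1)) Filter.atTop (nhds 0) := by
        have := tendsto_const_div_atTop_nhds_zero_nat t
        have h := this.comp (Filter.tendsto_add_atTop_nat 1)
        have heq : (fun m : ℕ => t / (↑m + 1)) = (fun n : ℕ => t / ↑n) ∘ fun a => a + 1 := by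
          funext m
          simp [Function.comp]
        rw [heq]
        exact h
      have h2 : Filter.Tendsto (fun m : ℕ => (t / (m + 1)) ^ ((i : ℕ) + 1) * t)
          Filter.atTop (nhds 0) := by
        have := (h1.pow ((i : ℕ) + 1)).mul_const t
        simpa using this
      have := (tendsto_const_nhds (x := ∑ j, x j ^ ((i : ℕ) + 2))
        (f := Filter.atTop (α := ℕ))).add h2
      simpa using this
    · refine Filter.Eventually.of_forall fun m => ?_
      simp only [Set.mem_iUnion, Set.mem_image]
      refine ⟨n + (m + 1), le_trans hn (Nat.le_add_right _ _),
        Fin.append x fun _ => t / (m + 1), ?_, rfl⟩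
      constructor
      · intro j
        refine Fin.addCases (fun j0 => ?_) (fun j0 => ?_) j
        · simpa [Fin.append_left] using hx.1 j0
        · simp only [Fin.append_right]
          positivity
      · rw [Fin.sum_univ_add]
        simp only [Fin.append_left, Fin.append_right, Finset.sum_const, Finset.card_univ,
          Fintype.card_fin, nsmul_eq_mul]
        have hm : ((m : ℝ) + 1) ≠ 0 := by positivity
        push_cast
        field_simp
        ring
end

section
/- For all n ≥ d ≥ 3, the convex hull ℰ_{n,d} of E_{n,d} is a convex polytope: it equals the convex hull of the n points v_k := (C(k,2)/k², C(k,3)/k³, …, C(k,d)/k^d) for k = 1,…,n (where C(k,j) is the binomial coefficient), and there exists an invertible affine linear map φ : ℝ^{d-1} → ℝ^{d-1} with φ(1/k, 1/k², …, 1/k^{d-1}) = v_k for all positive integers k; in particular ℰ_{n,d} is the image under φ of the cyclic polytope conv{(1/k,…,1/k^{d-1}) : k = 1,…,n}. -/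
open Polynomial Finset Function

/-- The vertex `v_k = (C(k,2)/k², …, C(k,d)/k^d)`. -/
noncomputable def vPt (d k : ℕ) : Fin (d - 1) → ℝ :=
  fun i => (k.choose ((i : ℕ) + 2) : ℝ) / (k : ℝ) ^ ((i : ℕ) + 2)

/-- The point `(1/k, 1/k², …, 1/k^{d-1})` on the moment curve. -/
noncomputable def momentPt (d k : ℕ) : Fin (d - 1) → ℝ :=
  fun i => (1 / (k : ℝ)) ^ ((i : ℕ) + 1)

noncomputable def Gfun (n d : ℕ) (c : Fin (d-1) → ℝ) (x : Fin n → ℝ) : ℝ :=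
  ∑ m : Fin (d-1), c m * esymm n ((m : ℕ) + 2) x



noncomputable def prodX (n : ℕ) (x : Fin n → ℝ) : Polynomial ℝ :=
  ∏ i, (X + C (x i))

lemma esymm_eq_coeff {n a : ℕ} (ha : a ≤ n) (x : Fin n → ℝ) :
    esymm n a x = (prodX n x).coeff (n - a) := by
  rw [prodX, Finset.prod_X_add_C_coeff _ _ (by simp)]
  simp only [card_univ, Fintype.card_fin, esymm]
  congr 2
  omega

lemma prodX_two_level {n : ℕ} (x : Fin n → ℝ) (c : ℝ) (S : Finset (Fin n))
    (h1 : ∀ i ∈ S, x i = c) (h0 : ∀ i ∉ S, x i = 0) :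
    prodX n x = X ^ (n - S.card) * (X + C c) ^ S.card := by
  rw [prodX, ← Finset.prod_mul_prod_compl S]
  have e1 : ∏ i ∈ S, (X + C (x i)) = (X + C c) ^ S.card := by
    rw [Finset.prod_congr rfl (fun i hi => by rw [h1 i hi] : ∀ i ∈ S, X + C (x i) = X + C c),
      Finset.prod_const]
  have e2 : ∏ i ∈ Sᶜ, (X + C (x i)) = (X : ℝ[X]) ^ (n - S.card) := by
    rw [Finset.prod_congr rfl
        (fun i hi => by rw [h0 i (by simpa using hi), map_zero, add_zero] :
          ∀ i ∈ Sᶜ, X + C (x i) = X),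
      Finset.prod_const, card_compl, Fintype.card_fin]
  rw [e1, e2, mul_comm]

lemma coeff_two_level {n k a : ℕ} (hk : k ≤ n) (ha : a ≤ n) (c : ℝ) :
    (X ^ (n - k) * (X + C c) ^ k).coeff (n - a) = c ^ a * (k.choose a : ℝ) := by
  by_cases h : a ≤ k
  · have : n - a = (n - k) + (k - a) := by omega
    rw [this, add_comm (n-k), coeff_X_pow_mul, coeff_X_add_C_pow]
    have : k - (k - a) = a := by omega
    rw [this, Nat.choose_symm h]
  · rw [mul_comm, Polynomial.coeff_mul_X_pow', if_neg (by omega),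
      Nat.choose_eq_zero_of_lt (by omega)]
    simp

lemma esymm_two_level {n k a : ℕ} (hk1 : 1 ≤ k) (hk : k ≤ n) (ha : a ≤ n)
    (x : Fin n → ℝ) (S : Finset (Fin n)) (hcard : S.card = k)
    (h1 : ∀ i ∈ S, x i = (k : ℝ)⁻¹) (h0 : ∀ i ∉ S, x i = 0) :
    esymm n a x = (k.choose a : ℝ) / (k : ℝ) ^ a := by
  rw [esymm_eq_coeff ha, prodX_two_level x _ S h1 h0, hcard, coeff_two_level hk ha]
  rw [inv_pow]
  field_simp




lemma sum_split {n : ℕ} {i j : Fin n} (hij : i ≠ j) (f : Fin n → ℝ) :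
    ∑ l, f l = f i + f j + ∑ l ∈ (univ.erase i).erase j, f l := by
  rw [← Finset.add_sum_erase _ f (mem_univ i),
      ← Finset.add_sum_erase _ f (Finset.mem_erase.mpr ⟨hij.symm, mem_univ j⟩)]
  ring

lemma update_apply_i {n : ℕ} (x : Fin n → ℝ) {i j : Fin n} (hij : i ≠ j) (t u : ℝ) :
    update (update x i t) j u i = t := by
  rw [Function.update_of_ne hij, Function.update_self]

lemma update_apply_j {n : ℕ} (x : Fin n → ℝ) {i j : Fin n} (t u : ℝ) :
    update (update x i t) j u j = u := Function.update_self _ _ _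

lemma update_apply_rest {n : ℕ} (x : Fin n → ℝ) {i j l : Fin n} (hli : l ≠ i) (hlj : l ≠ j)
    (t u : ℝ) : update (update x i t) j u l = x l := by
  rw [Function.update_of_ne hlj, Function.update_of_ne hli]

lemma update_mem_stdSimplex {n : ℕ} {x : Fin n → ℝ} (hx : x ∈ stdSimplex ℝ (Fin n))
    {i j : Fin n} (hij : i ≠ j) {t u : ℝ} (ht : 0 ≤ t) (hu : 0 ≤ u)
    (hs : t + u = x i + x j) :
    update (update x i t) j u ∈ stdSimplex ℝ (Fin n) := by
  constructor
  · intro l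
    by_cases hlj : l = j
    · subst hlj; rw [update_apply_j]; exact hu
    by_cases hli : l = i
    · subst hli; rw [update_apply_i _ hij]; exact ht
    · rw [update_apply_rest _ hli hlj]; exact hx.1 l
  · rw [sum_split hij, update_apply_i _ hij, update_apply_j,
      Finset.sum_congr rfl (fun l hl => by
        simp only [mem_erase] at hl
        exact update_apply_rest x hl.2.1 hl.1 t u)]
    have := sum_split hij x
    rw [hx.2] at this
    linarith

lemma prodX_update_update {n : ℕ} (x : Fin n → ℝ) {i j : Fin n} (hij : i ≠ j) (t u : ℝ) :
    prodX n (update (update x i t) j u) =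
      (X + C t) * ((X + C u) * ∏ l ∈ (univ.erase i).erase j, (X + C (x l))) := by
  rw [prodX, ← Finset.mul_prod_erase _ _ (mem_univ i),
      ← Finset.mul_prod_erase _ _ (Finset.mem_erase.mpr ⟨hij.symm, mem_univ j⟩)]
  rw [update_apply_i _ hij, update_apply_j]
  congr 2
  refine Finset.prod_congr rfl (fun l hl => ?_)
  simp only [mem_erase] at hl
  rw [update_apply_rest x hl.2.1 hl.1]

lemma G_decomp (n d : ℕ) (hn : d ≤ n) (c : Fin (d-1) → ℝ) (x : Fin n → ℝ) {i j : Fin n}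
    (hij : i ≠ j) :
    ∃ α β γ : ℝ, ∀ t u : ℝ,
      Gfun n d c (update (update x i t) j u) = α + (t + u) * β + (t * u) * γ := by
  set R := ∏ l ∈ (univ.erase i).erase j, (X + C (x l)) with hR
  have coord : ∀ (a : ℕ), a ≤ n → ∀ t u : ℝ,
      esymm n a (update (update x i t) j u) =
        (X^2 * R).coeff (n-a) + (t+u)*((X*R).coeff (n-a)) + (t*u)*(R.coeff (n-a)) := by
    intro a ha t u
    rw [esymm_eq_coeff ha, prodX_update_update x hij]
    have expand : (X + C t) * ((X + C u) * R) =
        X^2 * R + C (t+u) * (X * R) + C (t*u) * R := by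
      rw [map_add, map_mul]; ring
    rw [expand, coeff_add, coeff_add, coeff_C_mul, coeff_C_mul]
  refine ⟨∑ m : Fin (d-1), c m * (X^2 * R).coeff (n - ((m:ℕ)+2)),
    ∑ m : Fin (d-1), c m * (X * R).coeff (n - ((m:ℕ)+2)),
    ∑ m : Fin (d-1), c m * R.coeff (n - ((m:ℕ)+2)), fun t u => ?_⟩
  have h1 : ∀ m : Fin (d-1), (m : ℕ) + 2 ≤ n := by
    intro m; have := m.isLt; omega
  rw [Gfun]
  calc ∑ m : Fin (d-1), c m * esymm n ((m:ℕ)+2) (update (update x i t) j u)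
      = ∑ m : Fin (d-1), (c m * (X^2 * R).coeff (n-((m:ℕ)+2))
          + (t+u) * (c m * (X*R).coeff (n-((m:ℕ)+2)))
          + (t*u) * (c m * R.coeff (n-((m:ℕ)+2)))) := by
        refine Finset.sum_congr rfl fun m _ => ?_
        rw [coord _ (h1 m)]; ring
    _ = _ := by
        rw [Finset.sum_add_distrib, Finset.sum_add_distrib, ← Finset.mul_sum, ← Finset.mul_sum]










lemma continuous_esymm (n a : ℕ) : Continuous (esymm n a) :=
  continuous_finset_sum _ fun s _ => continuous_finset_prod _ fun j _ => continuous_apply j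

lemma continuous_G (n d : ℕ) (c : Fin (d-1) → ℝ) : Continuous (Gfun n d c) :=
  continuous_finset_sum _ fun m _ => continuous_const.mul (continuous_esymm _ _)

lemma exists_dominating (n d : ℕ) (hd : 3 ≤ d) (hn : d ≤ n) (c : Fin (d-1) → ℝ)
    (x : Fin n → ℝ) (hx : x ∈ stdSimplex ℝ (Fin n)) :
    ∃ k ∈ Finset.Icc 1 n, Gfun n d c x ≤
      ∑ m : Fin (d-1), c m * ((k.choose ((m : ℕ)+2) : ℝ) / (k : ℝ) ^ ((m : ℕ)+2)) := by
  classical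
  have hG := continuous_G n d c
  obtain ⟨x₀, hx₀, hmax⟩ := (isCompact_stdSimplex ℝ (Fin n)).exists_isMaxOn ⟨x, hx⟩
    hG.continuousOn
  rw [isMaxOn_iff] at hmax
  set T : Set (Fin n → ℝ) :=
    stdSimplex ℝ (Fin n) ∩ {y | Gfun n d c y = Gfun n d c x₀} with hT
  have hTc : IsCompact T :=
    (isCompact_stdSimplex ℝ (Fin n)).inter_right (isClosed_eq hG continuous_const)
  have hp : Continuous (fun y : Fin n → ℝ => ∑ l, (y l)^2) :=
    continuous_finset_sum _ fun l _ => (continuous_apply l).pow 2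
  obtain ⟨z, hzT, hpz⟩ := hTc.exists_isMaxOn ⟨x₀, hx₀, rfl⟩ hp.continuousOn
  rw [isMaxOn_iff] at hpz
  obtain ⟨hzΔ, hzG⟩ := hzT
  have key : ∀ i j : Fin n, 0 < z i → 0 < z j → z i = z j := by
    intro i j hi hj
    by_contra hne
    have hij : i ≠ j := fun h => hne (by rw [h])
    obtain ⟨α, β, γ, hdec⟩ := G_decomp n d hn c z hij
    have hzeq : update (update z i (z i)) j (z j) = z := by
      rw [Function.update_eq_self, Function.update_eq_self]
    have hGz : Gfun n d c z = α + (z i + z j) * β + (z i * z j) * γ := by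
      have := hdec (z i) (z j); rwa [hzeq] at this
    set s : ℝ := z i + z j with hs
    have hspos : 0 < s := by positivity
    rcases lt_trichotomy γ 0 with hγ | hγ | hγ
    · have hyΔ : update (update z i 0) j s ∈ stdSimplex ℝ (Fin n) :=
        update_mem_stdSimplex hzΔ hij le_rfl hspos.le (zero_add s)
      have h1 := hmax _ hyΔ
      rw [hdec 0 s] at h1
      rw [hzG] at hGz
      nlinarith [mul_pos hi hj]
    · have hyΔ : update (update z i 0) j s ∈ stdSimplex ℝ (Fin n) :=
        update_mem_stdSimplex hzΔ hij le_rfl hspos.le (zero_add s)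
      have hyT : update (update z i 0) j s ∈ T := by
        refine ⟨hyΔ, ?_⟩
        rw [Set.mem_setOf_eq, hdec 0 s, ← hzG, hGz, hγ]
        ring
      have h2 := hpz _ hyT
      have hpy : ∑ l, (update (update z i 0) j s l)^2
          = 0^2 + s^2 + ∑ l ∈ (univ.erase i).erase j, (z l)^2 := by
        rw [sum_split hij]
        rw [update_apply_i _ hij, update_apply_j]
        congr 1
        refine Finset.sum_congr rfl fun l hl => ?_
        simp only [mem_erase] at hl
        rw [update_apply_rest z hl.2.1 hl.1]
      have hpz2 : ∑ l, (z l)^2 = (z i)^2 + (z j)^2 + ∑ l ∈ (univ.erase i).erase j, (z l)^2 :=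
        sum_split hij _
      rw [hpy, hpz2] at h2
      nlinarith [mul_pos hi hj]
    · have hyΔ : update (update z i (s/2)) j (s/2) ∈ stdSimplex ℝ (Fin n) :=
        update_mem_stdSimplex hzΔ hij (by positivity) (by positivity) (by ring)
      have h3 := hmax _ hyΔ
      rw [hdec (s/2) (s/2)] at h3
      rw [hzG] at hGz
      have h4 : 0 < (z i - z j)^2 := pow_two_pos_of_ne_zero (sub_ne_zero.mpr hne)
      rw [hs] at h3 hGz
      nlinarith [mul_pos h4 hγ]
  -- the support
  set S : Finset (Fin n) := univ.filter (fun l => z l ≠ 0) with hSdef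
  have hz0 : ∀ l ∉ S, z l = 0 := by
    intro l hl
    by_contra h
    exact hl (Finset.mem_filter.mpr ⟨mem_univ l, h⟩)
  have hSpos : ∀ l ∈ S, 0 < z l := by
    intro l hl
    rcases Finset.mem_filter.mp hl with ⟨-, h⟩
    exact lt_of_le_of_ne (hzΔ.1 l) (Ne.symm h)
  have hSne : S.Nonempty := by
    by_contra h
    rw [Finset.not_nonempty_iff_eq_empty] at h
    have : ∑ l, z l = 0 := Finset.sum_eq_zero fun l _ => hz0 l (by rw [h]; exact Finset.notMem_empty l)
    rw [hzΔ.2] at this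
    norm_num at this
  obtain ⟨i₀, hi₀⟩ := hSne
  set k : ℕ := S.card with hk
  have hk1 : 1 ≤ k := Finset.card_pos.mpr ⟨i₀, hi₀⟩
  have hkn : k ≤ n := by
    calc k ≤ Fintype.card (Fin n) := Finset.card_le_univ S
    _ = n := Fintype.card_fin n
  have hval : ∀ l ∈ S, z l = z i₀ := fun l hl => key l i₀ (hSpos l hl) (hSpos i₀ hi₀)
  have hsum : (k : ℝ) * z i₀ = 1 := by
    have : ∑ l ∈ S, z l = 1 := by
      rw [← hzΔ.2]
      exact Finset.sum_filter_ne_zero univ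
    rw [Finset.sum_congr rfl hval, Finset.sum_const, nsmul_eq_mul] at this
    exact this
  have hkR : (0:ℝ) < (k:ℝ) := by exact_mod_cast hk1
  have hinv : ∀ l ∈ S, z l = (k:ℝ)⁻¹ := by
    intro l hl
    rw [hval l hl]
    field_simp
    linarith [hsum]
  have hesymm : ∀ m : Fin (d-1),
      esymm n ((m:ℕ)+2) z = ((k.choose ((m:ℕ)+2) : ℝ)) / (k:ℝ)^((m:ℕ)+2) := by
    intro m
    exact esymm_two_level hk1 hkn (by have := m.isLt; omega) z S rfl hinv hz0
  refine ⟨k, Finset.mem_Icc.mpr ⟨hk1, hkn⟩, ?_⟩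
  calc Gfun n d c x ≤ Gfun n d c x₀ := hmax x hx
    _ = Gfun n d c z := hzG.symm
    _ = _ := Finset.sum_congr rfl fun m _ => by rw [hesymm m]






noncomputable def stdPt (n k : ℕ) : Fin n → ℝ :=
  fun i => if (i : ℕ) < k then (k : ℝ)⁻¹ else 0

lemma card_filter_lt {n k : ℕ} (hk : k ≤ n) :
    (univ.filter (fun i : Fin n => (i : ℕ) < k)).card = k := by
  classical
  rw [Finset.card_filter]
  rw [Fin.sum_univ_eq_sum_range (fun m => if m < k then 1 else 0) n]
  rw [← Finset.card_filter]
  have : (Finset.range n).filter (fun m => m < k) = Finset.range k := by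
    ext m; simp only [Finset.mem_filter, Finset.mem_range]; omega
  rw [this, Finset.card_range]

lemma stdPt_mem {n k : ℕ} (hk1 : 1 ≤ k) (hk : k ≤ n) :
    stdPt n k ∈ stdSimplex ℝ (Fin n) := by
  constructor
  · intro i
    unfold stdPt
    split
    · positivity
    · exact le_rfl
  · show ∑ i : Fin n, (if (i:ℕ) < k then (k:ℝ)⁻¹ else 0) = 1
    rw [Finset.sum_ite, Finset.sum_const, Finset.sum_const, card_filter_lt hk]
    have : (k : ℝ) ≠ 0 := by positivity
    simp [this]

lemma esymm_stdPt {n k : ℕ} (hk1 : 1 ≤ k) (hk : k ≤ n) {a : ℕ} (ha : a ≤ n) :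
    esymm n a (stdPt n k) = (k.choose a : ℝ) / (k : ℝ) ^ a := by
  classical
  refine esymm_two_level hk1 hk ha _ (univ.filter (fun i : Fin n => (i : ℕ) < k))
    (card_filter_lt hk) (fun i hi => ?_) (fun i hi => ?_)
  · rcases Finset.mem_filter.mp hi with ⟨-, h⟩
    simp [stdPt, h]
  · have h : ¬ ((i : ℕ) < k) := fun h => hi (Finset.mem_filter.mpr ⟨mem_univ i, h⟩)
    simp [stdPt, h]

lemma part1 (n d : ℕ) (hd : 3 ≤ d) (hn : d ≤ n) :
    convexHull ℝ ((fun (x : Fin n → ℝ) (i : Fin (d - 1)) => esymm n ((i : ℕ) + 2) x) ''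
        stdSimplex ℝ (Fin n)) =
      convexHull ℝ {v : Fin (d - 1) → ℝ | ∃ k ∈ Finset.Icc 1 n, v = vPt d k} := by
  classical
  set V : Set (Fin (d-1) → ℝ) := {v | ∃ k ∈ Finset.Icc 1 n, v = vPt d k} with hV
  have hVfin : V.Finite := by
    have : V = vPt d '' ((Finset.Icc 1 n : Finset ℕ) : Set ℕ) := by
      ext v
      simp only [hV, Set.mem_setOf_eq, Set.mem_image, Finset.mem_coe, eq_comm]
    rw [this]
    exact ((Finset.Icc 1 n).finite_toSet).image _
  apply Set.Subset.antisymm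
  · refine convexHull_min ?_ (convex_convexHull ℝ V)
    rintro _ ⟨x, hx, rfl⟩
    by_contra h
    obtain ⟨L, u, hLu, hLV⟩ :=
      geometric_hahn_banach_point_closed (convex_convexHull ℝ V)
        (hVfin.isClosed_convexHull (𝕜 := ℝ)) h
    set c : Fin (d-1) → ℝ := fun m => -(L (fun j => if m = j then 1 else 0)) with hc
    obtain ⟨k, hkIcc, hdom⟩ := exists_dominating n d hd hn c x hx
    have hLrep : ∀ y : Fin (d-1) → ℝ, L y = ∑ m, y m • L (fun j => if m = j then 1 else 0) :=
      fun y => LinearMap.pi_apply_eq_sum_univ (L : (Fin (d-1) → ℝ) →ₗ[ℝ] ℝ) y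
    have e1 : Gfun n d c x = -(L (fun i => esymm n ((i:ℕ)+2) x)) := by
      rw [hLrep]
      rw [Gfun, ← Finset.sum_neg_distrib]
      refine Finset.sum_congr rfl fun m _ => ?_
      simp only [hc, smul_eq_mul]
      ring
    have e2 : ∑ m : Fin (d-1), c m * ((k.choose ((m : ℕ)+2) : ℝ) / (k : ℝ) ^ ((m : ℕ)+2))
        = -(L (vPt d k)) := by
      rw [hLrep]
      rw [← Finset.sum_neg_distrib]
      refine Finset.sum_congr rfl fun m _ => ?_
      simp only [hc, smul_eq_mul, vPt]
      ring
    rw [e1, e2] at hdom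
    have hmem : vPt d k ∈ convexHull ℝ V := subset_convexHull ℝ V ⟨k, hkIcc, rfl⟩
    have := hLV _ hmem
    linarith
  · refine convexHull_mono ?_
    rintro v ⟨k, hk, rfl⟩
    rcases Finset.mem_Icc.mp hk with ⟨hk1, hkn⟩
    refine ⟨stdPt n k, stdPt_mem hk1 hkn, ?_⟩
    funext i
    exact esymm_stdPt hk1 hkn (by have := i.isLt; omega)



/-- The polynomial `Q_a(T) = (1/(a+2)!) ∏_{j=1}^{a+1} (1 - jT)`, indexed by `a`. -/
noncomputable def Qpoly (a : ℕ) : Polynomial ℝ :=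
  C ((Nat.factorial (a + 2) : ℝ)⁻¹) * ∏ j ∈ Finset.range (a + 1), (C (-((j : ℝ) + 1)) * X + C 1)

lemma Qpoly_natDegree_le (a : ℕ) : (Qpoly a).natDegree ≤ a + 1 := by
  rw [Qpoly]
  apply le_trans (natDegree_C_mul_le _ _)
  apply le_trans (natDegree_prod_le _ _)
  have h1 : ∀ j ∈ Finset.range (a+1), (C (-((j : ℝ) + 1)) * X + C 1).natDegree ≤ 1 :=
    fun j _ => natDegree_linear_le
  apply le_trans (Finset.sum_le_sum h1)
  simp

lemma Qpoly_coeff_top (a : ℕ) : (Qpoly a).coeff (a + 1) ≠ 0 := by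
  have hne : ∀ j ∈ Finset.range (a+1), (C (-((j : ℝ) + 1)) * X + C 1) ≠ 0 := by
    intro j _
    intro h
    have := natDegree_linear (a := -((j:ℝ)+1)) (b := (1:ℝ)) (by
      intro hc; have : (0:ℝ) ≤ (j:ℝ) := Nat.cast_nonneg j; nlinarith)
    rw [h] at this
    simp at this
  have hdeg : (∏ j ∈ Finset.range (a+1), (C (-((j : ℝ) + 1)) * X + C 1)).natDegree = a + 1 := by
    rw [natDegree_prod _ _ hne]
    rw [Finset.sum_congr rfl (fun j _ => natDegree_linear (by
      intro hc; have : (0:ℝ) ≤ (j:ℝ) := Nat.cast_nonneg j; nlinarith))]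
    simp
  have hlead : (∏ j ∈ Finset.range (a+1), (C (-((j : ℝ) + 1)) * X + C 1)).leadingCoeff
      = ∏ j ∈ Finset.range (a+1), (-((j : ℝ) + 1)) := by
    rw [leadingCoeff_prod]
    exact Finset.prod_congr rfl fun j _ => leadingCoeff_linear (by
      intro hc; have : (0:ℝ) ≤ (j:ℝ) := Nat.cast_nonneg j; nlinarith)
  set P := ∏ j ∈ Finset.range (a+1), (C (-((j : ℝ) + 1)) * X + C 1) with hP
  rw [Qpoly, ← hP, coeff_C_mul, ← hdeg, coeff_natDegree, hlead]
  apply mul_ne_zero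
  · rw [ne_eq, inv_eq_zero]
    exact_mod_cast (Nat.factorial_ne_zero (a+2))
  · exact Finset.prod_ne_zero_iff.mpr fun j _ => by
      intro hc; have : (0:ℝ) ≤ (j:ℝ) := Nat.cast_nonneg j; nlinarith

lemma Qpoly_eval (a : ℕ) (t : ℝ) :
    (Qpoly a).eval t = (Nat.factorial (a + 2) : ℝ)⁻¹ *
      ∏ j ∈ Finset.range (a + 1), (1 - ((j : ℝ) + 1) * t) := by
  rw [Qpoly, eval_mul, eval_C, eval_prod]
  congr 1
  refine Finset.prod_congr rfl fun j _ => ?_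
  simp [eval_add, eval_mul, eval_C, eval_X]
  ring

lemma choose_cast_eq (k a : ℕ) (hk : 1 ≤ k) :
    (k.choose a : ℝ) / (k : ℝ) ^ a
      = (Nat.factorial a : ℝ)⁻¹ * ∏ j ∈ Finset.range a, (1 - (j : ℝ) / (k : ℝ)) := by
  have hk0 : (k : ℝ) ≠ 0 := by positivity
  have key : (k.choose a : ℝ) * (Nat.factorial a : ℝ) = ∏ j ∈ Finset.range a, ((k : ℝ) - j) := by
    by_cases h : a ≤ k
    · have hN : k.choose a * Nat.factorial a = k.descFactorial a := by
        rw [Nat.descFactorial_eq_factorial_mul_choose, Nat.mul_comm]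
      have : ((k.descFactorial a : ℕ) : ℝ) = ∏ j ∈ Finset.range a, ((k : ℝ) - j) := by
        rw [Nat.descFactorial_eq_prod_range, Nat.cast_prod]
        refine Finset.prod_congr rfl fun j hj => ?_
        rw [Nat.cast_sub (by rcases Finset.mem_range.mp hj with hj; omega)]
      rw [← this, ← hN, Nat.cast_mul]
    · rw [Nat.choose_eq_zero_of_lt (by omega)]
      rw [Finset.prod_eq_zero (Finset.mem_range.mpr (show k < a by omega))]
      · simp
      · simp
  have hprod : ∏ j ∈ Finset.range a, (1 - (j : ℝ) / (k : ℝ))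
      = (∏ j ∈ Finset.range a, ((k : ℝ) - j)) / (k : ℝ) ^ a := by
    have step : ∏ j ∈ Finset.range a, (1 - (j:ℝ)/(k:ℝ))
        = ∏ j ∈ Finset.range a, (((k:ℝ) - j)/(k:ℝ)) :=
      Finset.prod_congr rfl fun j _ => by field_simp
    rw [step, Finset.prod_div_distrib, Finset.prod_const, Finset.card_range]
  rw [hprod, ← key]
  have hfa : (Nat.factorial a : ℝ) ≠ 0 := by exact_mod_cast Nat.factorial_ne_zero a
  field_simp

lemma Qpoly_eval_vPt (d k : ℕ) (hk : 1 ≤ k) (i : Fin (d-1)) :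
    (Qpoly (i : ℕ)).eval ((k : ℝ)⁻¹) = vPt d k i := by
  rw [Qpoly_eval, vPt, choose_cast_eq _ _ hk]
  congr 1
  rw [show (i:ℕ)+2 = ((i:ℕ)+1)+1 from rfl,
    Finset.prod_range_succ' (fun j => (1 - (j : ℝ)/(k:ℝ))) ((i:ℕ)+1)]
  rw [Nat.cast_zero, zero_div, sub_zero, mul_one]
  refine (Finset.prod_congr rfl fun j _ => ?_)
  push_cast
  rw [div_eq_mul_inv]

noncomputable def Mmat (d : ℕ) : Matrix (Fin (d-1)) (Fin (d-1)) ℝ :=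
  fun i j => (Qpoly (i : ℕ)).coeff ((j : ℕ) + 1)

noncomputable def bvec (d : ℕ) : Fin (d-1) → ℝ := fun i => (Qpoly (i : ℕ)).coeff 0

lemma Mmat_triangular (d : ℕ) : (Mmat d).BlockTriangular OrderDual.toDual := by
  intro i j h
  have hij : (i : ℕ) < (j : ℕ) := h
  exact coeff_eq_zero_of_natDegree_lt (lt_of_le_of_lt (Qpoly_natDegree_le _) (by omega))

lemma Mmat_det_ne (d : ℕ) : (Mmat d).det ≠ 0 := by
  rw [Matrix.det_of_lowerTriangular _ (Mmat_triangular d)]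
  exact Finset.prod_ne_zero_iff.mpr fun i _ => Qpoly_coeff_top _

noncomputable def phiEquiv (d : ℕ) : (Fin (d-1) → ℝ) ≃ᵃ[ℝ] (Fin (d-1) → ℝ) :=
  (((Mmat d).toLinearEquiv'
      (Matrix.invertibleOfIsUnitDet _ (isUnit_iff_ne_zero.mpr (Mmat_det_ne d)))).toAffineEquiv).trans
    (AffineEquiv.constVAdd ℝ _ (bvec d))

lemma phiEquiv_apply (d : ℕ) (x : Fin (d-1) → ℝ) :
    phiEquiv d x = bvec d + (Mmat d).mulVec x := by
  simp [phiEquiv, AffineEquiv.trans_apply, AffineEquiv.constVAdd_apply, vadd_eq_add]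
  rfl

lemma sum_range_shift (f : ℕ → ℝ) (d : ℕ) (hd : 1 ≤ d) :
    ∑ m ∈ Finset.range d, f m = f 0 + ∑ j ∈ Finset.range (d-1), f (j+1) := by
  obtain ⟨e, rfl⟩ : ∃ e, d = e + 1 := ⟨d-1, by omega⟩
  rw [Finset.sum_range_succ' f e]
  simp [add_comm]

lemma phiEquiv_moment (d : ℕ) (hd : 3 ≤ d) (k : ℕ) (hk : 1 ≤ k) :
    phiEquiv d (momentPt d k) = vPt d k := by
  funext i
  rw [phiEquiv_apply]
  have hmv : (bvec d + (Mmat d).mulVec (momentPt d k)) i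
      = (Qpoly (i : ℕ)).coeff 0 +
        ∑ j : Fin (d-1), (Qpoly (i : ℕ)).coeff ((j : ℕ)+1) * ((k:ℝ)⁻¹)^((j:ℕ)+1) := by
    simp only [Pi.add_apply, Matrix.mulVec, dotProduct, bvec, Mmat]
    congr 1
    refine Finset.sum_congr rfl fun j _ => ?_
    rw [momentPt, one_div]
  rw [hmv, ← Qpoly_eval_vPt d k hk i]
  have hdeg : (Qpoly (i:ℕ)).natDegree < d :=
    lt_of_le_of_lt (Qpoly_natDegree_le _) (by have := i.isLt; omega)
  rw [Polynomial.eval_eq_sum_range' hdeg]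
  rw [sum_range_shift (fun m => (Qpoly (i:ℕ)).coeff m * ((k:ℝ)⁻¹)^m) d (by omega)]
  simp only [pow_zero, mul_one]
  congr 1
  rw [← Fin.sum_univ_eq_sum_range (fun j => (Qpoly (i:ℕ)).coeff (j+1) * ((k:ℝ)⁻¹)^(j+1)) (d-1)]


/-- **Theorem 5.1.** For `n ≥ d ≥ 3`, the convex hull `ℰ_{n,d}` of
`E_{n,d} = (e₂,…,e_d)(Δ_{n-1})` is the convex hull of the points `v_k`, `k ∈ [n]`, and is
the image of the cyclic polytope `conv{(1/k,…,1/k^{d-1}) : k ∈ [n]}` under an invertible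
affine linear map sending each moment-curve point `(1/k,…,1/k^{d-1})` to `v_k`. -/
theorem convex_hull_of_elementary_image (n d : ℕ) (hd : 3 ≤ d) (hn : d ≤ n) :
    convexHull ℝ ((fun (x : Fin n → ℝ) (i : Fin (d - 1)) => esymm n ((i : ℕ) + 2) x) ''
        stdSimplex ℝ (Fin n)) =
      convexHull ℝ {v : Fin (d - 1) → ℝ | ∃ k ∈ Finset.Icc 1 n, v = vPt d k} ∧
    ∃ φ : (Fin (d - 1) → ℝ) ≃ᵃ[ℝ] (Fin (d - 1) → ℝ),
      (∀ k : ℕ, 1 ≤ k → φ (momentPt d k) = vPt d k) ∧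
      convexHull ℝ ((fun (x : Fin n → ℝ) (i : Fin (d - 1)) => esymm n ((i : ℕ) + 2) x) ''
          stdSimplex ℝ (Fin n)) =
        φ '' convexHull ℝ {v : Fin (d - 1) → ℝ | ∃ k ∈ Finset.Icc 1 n, v = momentPt d k} := by
  have h1 := part1 n d hd hn
  refine ⟨h1, phiEquiv d, fun k hk => phiEquiv_moment d hd k hk, ?_⟩
  rw [h1]
  have himg : ⇑(phiEquiv d) '' (convexHull ℝ {v : Fin (d - 1) → ℝ | ∃ k ∈ Finset.Icc 1 n, v = momentPt d k})
      = convexHull ℝ (⇑(phiEquiv d) '' {v : Fin (d - 1) → ℝ | ∃ k ∈ Finset.Icc 1 n, v = momentPt d k}) := by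
    have := AffineMap.image_convexHull ((phiEquiv d).toAffineMap)
      {v : Fin (d - 1) → ℝ | ∃ k ∈ Finset.Icc 1 n, v = momentPt d k}
    simpa using this
  rw [himg]
  congr 1
  ext v
  constructor
  · rintro ⟨k, hk, rfl⟩
    exact ⟨momentPt d k, ⟨k, hk, rfl⟩, phiEquiv_moment d hd k (Finset.mem_Icc.mp hk).1⟩
  · rintro ⟨w, ⟨k, hk, rfl⟩, rfl⟩
    exact ⟨k, hk, phiEquiv_moment d hd k (Finset.mem_Icc.mp hk).1⟩
end

section
/- For all n ≥ d ≥ 3, the n points v_k := (C(k,2)/k², C(k,3)/k³, …, C(k,d)/k^d) ∈ ℝ^{d-1}, k = 1,…,n, are the vertices of a polytope of the combinatorial type of the cyclic polytope C(n,d−1): there exists an invertible affine linear map φ : ℝ^{d-1} → ℝ^{d-1} sending the moment-curve point (1/k, 1/k², …, 1/k^{d-1}) to v_k for every positive integer k. In particular, v_1,…,v_n are in convex position, i.e., each v_k is a vertex (extreme point) of conv{v_1,…,v_n}. -/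
open Polynomial Finset

noncomputable def Pm (m : ℕ) : Polynomial ℝ :=
  ∏ j ∈ Finset.range m, (1 - Polynomial.C (j : ℝ) * Polynomial.X)

lemma choose_mul_factorial_cast (k m : ℕ) :
    (k.choose m : ℝ) * m.factorial = ∏ j ∈ Finset.range m, ((k : ℝ) - j) := by
  induction m with
  | zero => simp
  | succ m ih =>
    rw [Finset.prod_range_succ, ← ih]
    rcases le_or_gt (m + 1) k with h1 | h1
    · have h := Nat.choose_succ_right_eq k m
      have h' : (k.choose (m + 1) : ℝ) * (m + 1) = (k.choose m : ℝ) * ((k : ℝ) - m) := by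
        have h2 := congrArg (Nat.cast (R := ℝ)) h
        push_cast [Nat.cast_sub (by omega : m ≤ k)] at h2
        exact h2
      rw [Nat.factorial_succ]
      push_cast
      linear_combination (m.factorial : ℝ) * h'
    · have hk2 : k.choose (m + 1) = 0 := Nat.choose_eq_zero_of_lt h1
      have : (k.choose m : ℝ) * m.factorial * ((k : ℝ) - m) = 0 := by
        rcases eq_or_lt_of_le (Nat.lt_succ_iff.mp h1) with rfl | h2
        · simp
        · simp [Nat.choose_eq_zero_of_lt h2]
      rw [hk2]
      push_cast
      linarith [this]

lemma Pm_eval (m k : ℕ) (hk : 1 ≤ k) :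
    (Pm m).eval (1 / (k : ℝ)) = (k.choose m : ℝ) * m.factorial / (k : ℝ) ^ m := by
  have hk0 : (k : ℝ) ≠ 0 := by
    have : 0 < k := hk
    exact_mod_cast this.ne'
  rw [Pm, Polynomial.eval_prod]
  have hcong : ∀ j ∈ Finset.range m,
      Polynomial.eval (1 / (k : ℝ)) (1 - Polynomial.C (j : ℝ) * Polynomial.X)
        = ((k : ℝ) - j) / k := by
    intro j _
    simp only [Polynomial.eval_sub, Polynomial.eval_one, Polynomial.eval_mul, Polynomial.eval_C,
      Polynomial.eval_X]
    field_simp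
  rw [Finset.prod_congr rfl hcong, Finset.prod_div_distrib, Finset.prod_const, Finset.card_range,
    ← choose_mul_factorial_cast]

lemma Pm_natDegree (m : ℕ) : (Pm (m + 1)).natDegree ≤ m := by
  induction m with
  | zero => simp [Pm]
  | succ m ih =>
    rw [Pm, Finset.prod_range_succ, ← Pm]
    refine le_trans (Polynomial.natDegree_mul_le) (add_le_add ih ?_)
    refine le_trans (Polynomial.natDegree_sub_le _ _) ?_
    simp only [Polynomial.natDegree_one, max_le_iff]
    exact ⟨by omega, le_trans (Polynomial.natDegree_C_mul_le _ _) (by simp)⟩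

lemma Pm_coeff_top (m : ℕ) : (Pm (m + 1)).coeff m = (-1) ^ m * m.factorial := by
  induction m with
  | zero => simp [Pm]
  | succ m ih =>
    have hexp : Pm (m + 2) = Pm (m + 1) - Polynomial.C ((m + 1 : ℕ) : ℝ) * (Pm (m + 1) * Polynomial.X) := by
      rw [Pm, Finset.prod_range_succ, ← Pm]; ring
    rw [hexp, Polynomial.coeff_sub, Polynomial.coeff_C_mul, Polynomial.coeff_mul_X,
      Polynomial.coeff_eq_zero_of_natDegree_lt (lt_of_le_of_lt (Pm_natDegree m) (by omega)), ih]
    push_cast [Nat.factorial_succ]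
    ring

/-- cast of `choose l 2`. -/
lemma choose_two_cast (l : ℕ) : (l.choose 2 : ℝ) = ((l:ℝ)^2 - l) / 2 := by
  have h := choose_mul_factorial_cast l 2
  norm_num [Finset.prod_range_succ] at h
  linarith [h]

lemma choose_three_cast (l : ℕ) : (l.choose 3 : ℝ) = ((l:ℝ)^3 - 3*(l:ℝ)^2 + 2*l) / 6 := by
  have h := choose_mul_factorial_cast l 3
  norm_num [Finset.prod_range_succ, Nat.factorial] at h
  nlinarith [h]



/-- **Lemma 5.3.** For `n ≥ d ≥ 3`, the points `v_k`, `k ∈ [n]`, are the vertices of a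
polytope of the combinatorial type of the cyclic polytope `C(n,d-1)`: an invertible affine
linear map sends the moment-curve points `(1/k,…,1/k^{d-1})` to the `v_k`; in particular
the `v_k` are in convex position. -/
theorem vertices_of_combinatorial_cyclic_polytope (n d : ℕ) (hd : 3 ≤ d) (hn : d ≤ n) :
    (∃ φ : (Fin (d - 1) → ℝ) ≃ᵃ[ℝ] (Fin (d - 1) → ℝ),
      ∀ k : ℕ, 1 ≤ k → φ (momentPt d k) = vPt d k) ∧
    ∀ k ∈ Finset.Icc 1 n,
      vPt d k ∉ convexHull ℝ {v : Fin (d - 1) → ℝ | ∃ l ∈ Finset.Icc 1 n, l ≠ k ∧ v = vPt d l} := by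
  constructor
  · classical
    set M : Matrix (Fin (d-1)) (Fin (d-1)) ℝ :=
      Matrix.of fun i j => (Pm ((i:ℕ)+2)).coeff ((j:ℕ)+1) / (((i:ℕ)+2).factorial : ℝ) with hMdef
    have hdegi : ∀ i : Fin (d-1), (Pm ((i:ℕ)+2)).natDegree ≤ (i:ℕ)+1 :=
      fun i => Pm_natDegree ((i:ℕ)+1)
    have htri : M.BlockTriangular OrderDual.toDual := by
      intro i j hij
      have hij' : (i:ℕ) < (j:ℕ) := hij
      have h0 : (Pm ((i:ℕ)+2)).coeff ((j:ℕ)+1) = 0 :=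
        Polynomial.coeff_eq_zero_of_natDegree_lt (lt_of_le_of_lt (hdegi i) (by omega))
      simp [hMdef, h0]
    have hdiag : ∀ i : Fin (d-1), M i i ≠ 0 := by
      intro i
      have htop : (Pm ((i:ℕ)+2)).coeff ((i:ℕ)+1)
          = (-1)^((i:ℕ)+1) * ((((i:ℕ)+1).factorial : ℝ)) := Pm_coeff_top _
      simp only [hMdef, Matrix.of_apply, htop]
      apply div_ne_zero
      · exact mul_ne_zero (pow_ne_zero _ (by norm_num))
          (by exact_mod_cast Nat.factorial_ne_zero _)
      · exact_mod_cast Nat.factorial_ne_zero _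
    have hdet : M.det ≠ 0 := by
      rw [Matrix.det_of_lowerTriangular M htri]
      exact Finset.prod_ne_zero_iff.mpr fun i _ => hdiag i
    have hinv : Invertible M := M.invertibleOfIsUnitDet (isUnit_iff_ne_zero.mpr hdet)
    set b : Fin (d-1) → ℝ := fun i => (Pm ((i:ℕ)+2)).coeff 0 / (((i:ℕ)+2).factorial : ℝ)
      with hbdef
    refine ⟨((M.toLinearEquiv' hinv).toAffineEquiv).trans
      (AffineEquiv.constVAdd ℝ (Fin (d-1) → ℝ) b), ?_⟩
    intro k hk
    have hk0 : (k:ℝ) ≠ 0 := by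
      have : 0 < k := hk
      exact_mod_cast this.ne'
    have happ : (M.toLinearEquiv' hinv) (momentPt d k) = M.mulVec (momentPt d k) := rfl
    simp only [AffineEquiv.trans_apply, LinearEquiv.coe_toAffineEquiv,
      AffineEquiv.constVAdd_apply, happ, vadd_eq_add]
    funext i
    have hfact : ((((i:ℕ)+2).factorial : ℕ) : ℝ) ≠ 0 := by
      exact_mod_cast Nat.factorial_ne_zero _
    have hmv : M.mulVec (momentPt d k) i
        = (∑ j ∈ Finset.range (d-1),
            (Pm ((i:ℕ)+2)).coeff (j+1) * (1/(k:ℝ))^(j+1)) / (((i:ℕ)+2).factorial : ℝ) := by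
      rw [Matrix.mulVec, dotProduct, Finset.sum_div,
        ← Fin.sum_univ_eq_sum_range
          (fun j => (Pm ((i:ℕ)+2)).coeff (j+1) * (1/(k:ℝ))^(j+1) / (((i:ℕ)+2).factorial : ℝ))
          (d-1)]
      refine Finset.sum_congr rfl fun j _ => ?_
      simp only [hMdef, Matrix.of_apply, momentPt]
      ring
    have hdlt : (Pm ((i:ℕ)+2)).natDegree < (d-1)+1 := by
      have := i.isLt
      exact lt_of_le_of_lt (hdegi i) (by omega)
    have hsum : (Pm ((i:ℕ)+2)).eval (1/(k:ℝ))
        = ∑ m ∈ Finset.range ((d-1)+1), (Pm ((i:ℕ)+2)).coeff m * (1/(k:ℝ))^m :=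
      Polynomial.eval_eq_sum_range' hdlt _
    rw [Finset.sum_range_succ', Pm_eval _ k hk] at hsum
    have hkp : (k:ℝ)^((i:ℕ)+2) ≠ 0 := pow_ne_zero _ hk0
    show b i + M.mulVec (momentPt d k) i = vPt d k i
    rw [hmv, hbdef, vPt]
    simp only []
    have hS : ∑ j ∈ Finset.range (d-1), (Pm ((i:ℕ)+2)).coeff (j+1) * (1/(k:ℝ))^(j+1)
        = (k.choose ((i:ℕ)+2) : ℝ) * (((i:ℕ)+2).factorial : ℝ) / (k:ℝ)^((i:ℕ)+2)
          - (Pm ((i:ℕ)+2)).coeff 0 := by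
      rw [hsum]
      simp
    rw [hS]
    field_simp
    ring
  · intro k hk hmem
    rw [Finset.mem_Icc] at hk
    have hk1 : 1 ≤ k := hk.1
    have hk0 : (k:ℝ) ≠ 0 := by
      have : 0 < k := hk1
      exact_mod_cast this.ne'
    set i0 : Fin (d-1) := ⟨0, by omega⟩ with hi0
    set i1 : Fin (d-1) := ⟨1, by omega⟩ with hi1
    set c : ℝ := ((k:ℝ))⁻¹ with hc
    set f : (Fin (d-1) → ℝ) → ℝ := fun y => (3 - 4*c) * y i0 - 3 * y i1 with hf
    have hlin : IsLinearMap ℝ f := by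
      constructor
      · intro x y; simp only [hf, Pi.add_apply]; ring
      · intro a x; simp only [hf, Pi.smul_apply, smul_eq_mul]; ring
    set r : ℝ := 1 + c^2 - 2*c with hr
    have hv0 : ∀ l : ℕ, vPt d l i0 = (l.choose 2 : ℝ) / (l:ℝ)^2 := by
      intro l; simp [vPt, hi0]
    have hv1 : ∀ l : ℕ, vPt d l i1 = (l.choose 3 : ℝ) / (l:ℝ)^3 := by
      intro l; simp [vPt, hi1]
    have key : ∀ l : ℕ, 1 ≤ l →
        f (vPt d l) - r = -(((l:ℝ))⁻¹ - c)^2 := by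
      intro l hl
      have hl0 : (l:ℝ) ≠ 0 := by
        have : 0 < l := hl
        exact_mod_cast this.ne'
      simp only [hf, hv0, hv1, choose_two_cast, choose_three_cast, hr, hc]
      field_simp
      ring
    have hsub : {v : Fin (d - 1) → ℝ | ∃ l ∈ Finset.Icc 1 n, l ≠ k ∧ v = vPt d l}
        ⊆ {y : Fin (d-1) → ℝ | f y < r} := by
      rintro v ⟨l, hl, hlk, rfl⟩
      rw [Finset.mem_Icc] at hl
      have hkey := key l hl.1
      have hne : ((l:ℝ))⁻¹ - c ≠ 0 := by
        rw [hc, sub_ne_zero]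
        intro hEq
        exact hlk (Nat.cast_injective (inv_injective hEq))
      have : 0 < (((l:ℝ))⁻¹ - c)^2 := by positivity
      have : f (vPt d l) - r < 0 := by rw [hkey]; linarith
      simpa [Set.mem_setOf_eq] using by linarith [this]
    have hhull := convexHull_min hsub (convex_halfSpace_lt hlin r) hmem
    have heq : f (vPt d k) - r = 0 := by
      rw [key k hk1]; simp [hc]
    rw [Set.mem_setOf_eq] at hhull
    linarith
end

section
/- Let n ≥ d ≥ 3 and let f be a hook-shaped symmetric form of degree d in n variables, i.e., f = g(e_1, e_2, …, e_d) where g(y_1,…,y_d) = c_1 y_1^d + c_2 y_1^{d-2} y_2 + c_3 y_1^{d-3} y_3 + … + c_d y_d for some real coefficients c_1,…,c_d (so only e_1 occurs nonlinearly). Then f(x) ≥ 0 for all x ∈ ℝ_{≥0}^n if and only if g(1, C(k,2)/k², C(k,3)/k³, …, C(k,d)/k^d) ≥ 0 for every k ∈ {1,…,n}. -/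
namespace HookAux

open Finset

variable {n : ℕ}

noncomputable def E (t : Finset (Fin n)) (m : ℕ) (x : Fin n → ℝ) : ℝ :=
  ∑ s ∈ Finset.powersetCard m t, ∏ j ∈ s, x j

lemma esymm_eq_E (m : ℕ) (x : Fin n → ℝ) : esymm n m x = E univ m x := rfl

lemma E_congr {t : Finset (Fin n)} {m : ℕ} {x y : Fin n → ℝ}
    (h : ∀ a ∈ t, x a = y a) : E t m x = E t m y := by
  refine Finset.sum_congr rfl fun s hs => Finset.prod_congr rfl fun a ha => ?_
  exact h a ((mem_powersetCard.1 hs).1 ha)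

lemma E_insert {a : Fin n} {t : Finset (Fin n)} (ha : a ∉ t) (m : ℕ) (x : Fin n → ℝ) :
    E (insert a t) (m + 1) x = E t (m + 1) x + x a * E t m x := by
  unfold E
  rw [show m + 1 = Nat.succ m from rfl, powersetCard_succ_insert ha,
    Finset.sum_union, Finset.sum_image]
  · congr 1
    rw [Finset.mul_sum]
    refine Finset.sum_congr rfl fun s hs => ?_
    have has : a ∉ s := fun h => ha ((mem_powersetCard.1 hs).1 h)
    rw [Finset.prod_insert has]
  · intro s hs u hu hsu
    have has : a ∉ s := fun h => ha ((mem_powersetCard.1 hs).1 h)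
    have hau : a ∉ u := fun h => ha ((mem_powersetCard.1 hu).1 h)
    have := congrArg (fun v => Finset.erase v a) hsu
    simpa [Finset.erase_insert has, Finset.erase_insert hau] using this
  · rw [Finset.disjoint_right]
    rintro s hs hs'
    obtain ⟨u, _, rfl⟩ := Finset.mem_image.1 hs
    exact ha ((mem_powersetCard.1 hs').1 (mem_insert_self a u))

lemma esymm_indicator (S : Finset (Fin n)) (v : ℝ) (m : ℕ) :
    esymm n m (fun a => if a ∈ S then v else 0) = (S.card.choose m : ℝ) * v ^ m := by
  unfold esymm
  have h1 : ∀ s ∈ Finset.powersetCard m (univ : Finset (Fin n)),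
      (∏ j ∈ s, (if j ∈ S then v else 0)) = if s ⊆ S then v ^ m else 0 := by
    intro s hs
    by_cases hsS : s ⊆ S
    · rw [if_pos hsS, Finset.prod_congr rfl fun a ha => if_pos (hsS ha),
        Finset.prod_const, (mem_powersetCard.1 hs).2]
    · rw [if_neg hsS]
      obtain ⟨a, ha, haS⟩ := Finset.not_subset.1 hsS
      exact Finset.prod_eq_zero ha (if_neg haS)
  rw [Finset.sum_congr rfl h1, ← Finset.sum_filter]
  have h2 : Finset.filter (· ⊆ S) (Finset.powersetCard m (univ : Finset (Fin n)))
      = Finset.powersetCard m S := by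
    ext s
    simp only [Finset.mem_filter, mem_powersetCard]
    exact ⟨fun h => ⟨h.2, h.1.2⟩, fun h => ⟨⟨Finset.subset_univ s, h.2⟩, h.1⟩⟩
  rw [h2, Finset.sum_const, card_powersetCard, nsmul_eq_mul]

lemma esymm_smul (t : ℝ) (m : ℕ) (x : Fin n → ℝ) :
    esymm n m (fun a => t * x a) = t ^ m * esymm n m x := by
  unfold esymm
  rw [Finset.mul_sum]
  refine Finset.sum_congr rfl fun s hs => ?_
  rw [Finset.prod_mul_distrib, Finset.prod_const, (mem_powersetCard.1 hs).2]

lemma univ_eq_insert {i j : Fin n} (hij : i ≠ j) :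
    (univ : Finset (Fin n)) = insert i (insert j (univ \ {i, j})) := by
  ext a
  simp only [Finset.mem_insert, Finset.mem_sdiff, Finset.mem_univ, true_and,
    Finset.mem_insert, Finset.mem_singleton, true_iff]
  by_cases h1 : a = i
  · exact Or.inl h1
  by_cases h2 : a = j
  · exact Or.inr (Or.inl h2)
  · exact Or.inr (Or.inr (by tauto))

lemma not_mem_j {i j : Fin n} : j ∉ (univ : Finset (Fin n)) \ {i, j} := by simp

lemma not_mem_i {i j : Fin n} (hij : i ≠ j) : i ∉ insert j ((univ : Finset (Fin n)) \ {i, j}) := by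
  simp [hij]

lemma esymm_two_coord {i j : Fin n} (hij : i ≠ j) (a : ℕ) (x : Fin n → ℝ) :
    esymm n (a + 2) x = E (univ \ {i, j}) (a + 2) x
      + (x i + x j) * E (univ \ {i, j}) (a + 1) x
      + x i * x j * E (univ \ {i, j}) a x := by
  rw [esymm_eq_E]
  conv_lhs => rw [univ_eq_insert hij]
  rw [show a + 2 = (a + 1) + 1 from rfl, E_insert (not_mem_i hij),
    E_insert (not_mem_j), E_insert (not_mem_j)]
  ring

lemma sum_two_coord {i j : Fin n} (hij : i ≠ j) (x : Fin n → ℝ) :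
    ∑ a, x a = x i + x j + ∑ a ∈ univ \ {i, j}, x a := by
  conv_lhs => rw [univ_eq_insert hij]
  rw [Finset.sum_insert (not_mem_i hij), Finset.sum_insert (not_mem_j)]
  ring

lemma esymm_one (x : Fin n → ℝ) : esymm n 1 x = ∑ a, x a := by
  unfold esymm
  rw [Finset.powersetCard_one, Finset.sum_map]
  simp

noncomputable def G (d : ℕ) (c : ℕ → ℝ) (x : Fin n → ℝ) : ℝ :=
  c 1 + ∑ j ∈ Finset.Icc 2 d, c j * esymm n j x

lemma merge {d : ℕ} {c : ℕ → ℝ} {x : Fin n → ℝ} (hx : x ∈ stdSimplex ℝ (Fin n))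
    (hmin : IsMinOn (G d c) (stdSimplex ℝ (Fin n)) x) {i j : Fin n} (hij : i ≠ j)
    (hi : 0 < x i) (hj : 0 < x j) (hne : x i ≠ x j) :
    ∃ y ∈ stdSimplex ℝ (Fin n), IsMinOn (G d c) (stdSimplex ℝ (Fin n)) y ∧
      (Finset.univ.filter fun a => y a ≠ 0).card <
        (Finset.univ.filter fun a => x a ≠ 0).card := by
  set s : ℝ := x i + x j with hs
  have hspos : 0 < s := by positivity
  set y : Fin n → ℝ := fun a => if a = i then s else if a = j then 0 else x a with hy
  set z : Fin n → ℝ := fun a => if a = i then s / 2 else if a = j then s / 2 else x a with hz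
  have hyi : y i = s := by simp [hy]
  have hyj : y j = 0 := by simp [hy, hij.symm]
  have hzi : z i = s / 2 := by simp [hz]
  have hzj : z j = s / 2 := by simp [hz, hij.symm]
  have hyu : ∀ a ∈ Finset.univ \ {i, j}, y a = x a := by
    intro a ha
    simp only [Finset.mem_sdiff, Finset.mem_insert, Finset.mem_singleton] at ha
    push_neg at ha
    simp [hy, ha.2.1, ha.2.2]
  have hzu : ∀ a ∈ Finset.univ \ {i, j}, z a = x a := by
    intro a ha
    simp only [Finset.mem_sdiff, Finset.mem_insert, Finset.mem_singleton] at ha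
    push_neg at ha
    simp [hz, ha.2.1, ha.2.2]
  have hymem : y ∈ stdSimplex ℝ (Fin n) := by
    constructor
    · intro a
      by_cases h1 : a = i
      · simp [hy, h1]; positivity
      by_cases h2 : a = j
      · simp [hy, h1, h2, hij.symm]
      · simpa [hy, h1, h2] using hx.1 a
    · rw [sum_two_coord hij y, Finset.sum_congr rfl hyu, hyi, hyj]
      have := hx.2
      rw [sum_two_coord hij x] at this
      linarith
  have hzmem : z ∈ stdSimplex ℝ (Fin n) := by
    constructor
    · intro a
      by_cases h1 : a = i
      · simp [hz, h1]; positivity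
      by_cases h2 : a = j
      · simp [hz, h1, h2, hij.symm]; positivity
      · simpa [hz, h1, h2] using hx.1 a
    · rw [sum_two_coord hij z, Finset.sum_congr rfl hzu, hzi, hzj]
      have := hx.2
      rw [sum_two_coord hij x] at this
      linarith
  set l : ℝ := x i * x j / (s / 2) ^ 2 with hl
  have hq : (0:ℝ) < (s / 2) ^ 2 := by positivity
  have hl0 : 0 ≤ l := by positivity
  have hl1 : l < 1 := by
    have h2 : x i - x j ≠ 0 := sub_ne_zero.2 hne
    have h3 : 0 < (x i - x j) ^ 2 :=
      lt_of_le_of_ne (sq_nonneg _) (Ne.symm (pow_ne_zero 2 h2))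
    rw [hl, div_lt_one hq, hs]
    nlinarith [h3]
  clear_value s y z l
  have hper : ∀ m ∈ Finset.Icc 2 d,
      esymm n m x = l * esymm n m z + (1 - l) * esymm n m y := by
    intro m hm
    obtain ⟨a, rfl⟩ : ∃ a, m = a + 2 := ⟨m - 2, by have := (Finset.mem_Icc.1 hm).1; omega⟩
    rw [esymm_two_coord hij a x, esymm_two_coord hij a y, esymm_two_coord hij a z,
      E_congr hyu, E_congr hzu, hyi, hyj, hzi, hzj]
    rw [E_congr (m := a + 1) hyu, E_congr (m := a + 1) hzu,
      E_congr (m := a) hyu, E_congr (m := a) hzu]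
    have hcancel : l * (s / 2 * (s / 2)) = x i * x j := by
      rw [hl]; field_simp
    rw [← hs]
    linear_combination -E (Finset.univ \ {i, j}) a x * hcancel
  have hGaff : G d c x = l * G d c z + (1 - l) * G d c y := by
    unfold G
    have hc : ∀ m ∈ Finset.Icc 2 d, c m * esymm n m x
        = l * (c m * esymm n m z) + (1 - l) * (c m * esymm n m y) := by
      intro m hm; rw [hper m hm]; ring
    rw [Finset.sum_congr rfl hc, Finset.sum_add_distrib, ← Finset.mul_sum, ← Finset.mul_sum]
    ring
  have hxz : G d c x ≤ G d c z := isMinOn_iff.1 hmin z hzmem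
  have hxy : G d c x ≤ G d c y := isMinOn_iff.1 hmin y hymem
  have hGy : G d c y = G d c x := by
    have h1 : 0 ≤ l * (G d c z - G d c x) := mul_nonneg hl0 (sub_nonneg.2 hxz)
    have h2 : G d c y ≤ G d c x := by nlinarith [h1, hGaff, hl1]
    linarith
  refine ⟨y, hymem, ?_, ?_⟩
  · rw [isMinOn_iff]
    intro w hw
    rw [hGy]
    exact isMinOn_iff.1 hmin w hw
  · have hsub : (Finset.univ.filter fun a => y a ≠ 0)
        ⊆ (Finset.univ.filter fun a => x a ≠ 0).erase j := by
      intro a ha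
      simp only [Finset.mem_filter, Finset.mem_univ, true_and] at ha
      rw [Finset.mem_erase, Finset.mem_filter]
      have haj : a ≠ j := by rintro rfl; exact ha hyj
      refine ⟨haj, Finset.mem_univ a, ?_⟩
      by_cases hai : a = i
      · subst hai; exact ne_of_gt hi
      · rw [← hyu a (by simp [hai, haj])]
        exact ha
    have hjx : j ∈ Finset.univ.filter fun a => x a ≠ 0 := by simp [ne_of_gt hj]
    calc (Finset.univ.filter fun a => y a ≠ 0).card
        ≤ ((Finset.univ.filter fun a => x a ≠ 0).erase j).card := Finset.card_le_card hsub
      _ < (Finset.univ.filter fun a => x a ≠ 0).card := Finset.card_erase_lt_of_mem hjx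

lemma min_struct {d : ℕ} {c : ℕ → ℝ} (hn : 0 < n) :
    ∀ N : ℕ, ∀ x : Fin n → ℝ, (Finset.univ.filter fun a => x a ≠ 0).card ≤ N →
      x ∈ stdSimplex ℝ (Fin n) → IsMinOn (G d c) (stdSimplex ℝ (Fin n)) x →
      ∃ k ∈ Finset.Icc 1 n, G d c x
        = c 1 + ∑ j ∈ Finset.Icc 2 d, c j * ((k.choose j : ℝ) / (k : ℝ) ^ j) := by
  intro N
  induction N with
  | zero =>
    intro x hcard hx _
    exfalso
    have hall : ∀ a, x a = 0 := by
      intro a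
      by_contra h
      have ha : a ∈ Finset.univ.filter fun b => x b ≠ 0 := by simp [h]
      have := Finset.card_pos.2 ⟨a, ha⟩
      omega
    have h1 := hx.2
    rw [Finset.sum_congr rfl fun a _ => hall a, Finset.sum_const_zero] at h1
    norm_num at h1
  | succ N ih =>
    intro x hcard hx hmin
    by_cases hex : ∃ i j, i ≠ j ∧ 0 < x i ∧ 0 < x j ∧ x i ≠ x j
    · obtain ⟨i, j, hij, hi, hj, hne⟩ := hex
      obtain ⟨y, hymem, hymin, hyc⟩ := merge hx hmin hij hi hj hne
      obtain ⟨k, hk, hky⟩ := ih y (by omega) hymem hymin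
      refine ⟨k, hk, ?_⟩
      rw [← hky]
      exact le_antisymm (isMinOn_iff.1 hmin y hymem) (isMinOn_iff.1 hymin x hx)
    · push_neg at hex
      obtain ⟨i₀, hi₀⟩ : ∃ a, x a ≠ 0 := by
        by_contra h
        push_neg at h
        have h1 := hx.2
        rw [Finset.sum_congr rfl fun a _ => h a, Finset.sum_const_zero] at h1
        norm_num at h1
      have hpos : 0 < x i₀ := (hx.1 i₀).lt_of_ne (Ne.symm hi₀)
      set S : Finset (Fin n) := Finset.univ.filter fun a => x a ≠ 0 with hS
      set k : ℕ := S.card with hk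
      have hk1 : 1 ≤ k := Finset.card_pos.2 ⟨i₀, by simp [hS, hi₀]⟩
      have hkn : k ≤ n := by
        have := Finset.card_filter_le (Finset.univ : Finset (Fin n)) fun a => x a ≠ 0
        simpa [hS, hk] using this
      obtain ⟨v, hv0, hveq⟩ : ∃ v, 0 < v ∧ x = fun a => if a ∈ S then v else 0 := by
        refine ⟨x i₀, hpos, funext fun a => ?_⟩
        by_cases haS : a ∈ S
        · rw [if_pos haS]
          have hax : x a ≠ 0 := by simpa [hS] using haS
          have hapos : 0 < x a := (hx.1 a).lt_of_ne (Ne.symm hax)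
          by_cases hai : a = i₀
          · rw [hai]
          · exact hex a i₀ hai hapos hpos
        · rw [if_neg haS]
          by_contra h
          exact haS (by simp [hS, h])
      have hsumx : (k : ℝ) * v = 1 := by
        have h1 := hx.2
        rw [hveq, ← Finset.sum_filter] at h1
        have h2 : Finset.univ.filter (· ∈ S) = S := by ext a; simp
        rw [h2, Finset.sum_const, nsmul_eq_mul] at h1
        exact h1
      have hkne : (k : ℝ) ≠ 0 := Nat.cast_ne_zero.2 (by omega)
      have hv : v = (k : ℝ)⁻¹ := by field_simp at hsumx ⊢; linarith
      refine ⟨k, Finset.mem_Icc.2 ⟨hk1, hkn⟩, ?_⟩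
      unfold G
      congr 1
      refine Finset.sum_congr rfl fun m hm => ?_
      rw [hveq, esymm_indicator, ← hk, hv, inv_pow, ← div_eq_mul_inv]

lemma esymm_zero_fun (m : ℕ) (hm : 1 ≤ m) : esymm n m (fun _ => (0 : ℝ)) = 0 := by
  unfold esymm
  refine Finset.sum_eq_zero fun s hs => ?_
  obtain ⟨a, ha⟩ := Finset.card_pos.1 (by rw [(Finset.mem_powersetCard.1 hs).2]; omega)
  exact Finset.prod_eq_zero ha rfl

lemma G_continuous (d : ℕ) (c : ℕ → ℝ) : Continuous (G (n := n) d c) := by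
  unfold G esymm
  exact continuous_const.add (continuous_finset_sum _ fun j _ =>
    continuous_const.mul (continuous_finset_sum _ fun s _ =>
      continuous_finset_prod _ fun a _ => continuous_apply a))

lemma exists_min (hn : 0 < n) (d : ℕ) (c : ℕ → ℝ) :
    ∃ x ∈ stdSimplex ℝ (Fin n), IsMinOn (G d c) (stdSimplex ℝ (Fin n)) x := by
  have hne : (stdSimplex ℝ (Fin n)).Nonempty := by
    refine ⟨fun _ => (n : ℝ)⁻¹, fun _ => by positivity, ?_⟩
    rw [Finset.sum_const, Finset.card_univ, Fintype.card_fin, nsmul_eq_mul]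
    field_simp
  exact isCompact_stdSimplex ℝ (Fin n) |>.exists_isMinOn hne (G_continuous d c).continuousOn

end HookAux


open HookAux in
/-- **Theorem 5.6.** A hook-shaped symmetric form
`f = c₁·e₁^d + c₂·e₁^{d-2}·e₂ + … + c_d·e_d` of degree `d` in `n ≥ d` variables is
copositive (nonnegative on the nonnegative orthant) if and only if
`g(1, C(k,2)/k², …, C(k,d)/k^d) ≥ 0` for all `k ∈ [n]`. -/
theorem hook_shaped_copositivity_test (n d : ℕ) (hd : 3 ≤ d) (hn : d ≤ n) (c : ℕ → ℝ) :
    (∀ x : Fin n → ℝ, (∀ i, 0 ≤ x i) →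
        0 ≤ c 1 * esymm n 1 x ^ d +
          ∑ j ∈ Finset.Icc 2 d, c j * esymm n 1 x ^ (d - j) * esymm n j x) ↔
      ∀ k ∈ Finset.Icc 1 n,
        0 ≤ c 1 + ∑ j ∈ Finset.Icc 2 d, c j * ((k.choose j : ℝ) / (k : ℝ) ^ j) := by
  have hn0 : 0 < n := by omega
  constructor
  · intro hcop k hkmem
    rw [Finset.mem_Icc] at hkmem
    obtain ⟨hk1, hkn⟩ := hkmem
    obtain ⟨S, _, hScard⟩ := Finset.exists_subset_card_eq
      (show k ≤ (Finset.univ : Finset (Fin n)).card by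
        rw [Finset.card_univ, Fintype.card_fin]; exact hkn)
    have hkne : (k : ℝ) ≠ 0 := Nat.cast_ne_zero.2 (by omega)
    have h := hcop (fun a => if a ∈ S then (k : ℝ)⁻¹ else 0)
      (fun a => by split <;> positivity)
    simp only [esymm_indicator, hScard] at h
    rw [Nat.choose_one_right, pow_one, mul_inv_cancel₀ hkne] at h
    simp only [one_pow, mul_one] at h
    calc (0:ℝ) ≤ _ := h
      _ = c 1 + ∑ j ∈ Finset.Icc 2 d, c j * ((k.choose j : ℝ) / (k : ℝ) ^ j) := by
        congr 1
        refine Finset.sum_congr rfl fun m _ => ?_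
        rw [inv_pow, ← div_eq_mul_inv]
  · intro hval x hxnn
    have hts : 0 ≤ ∑ a, x a := Finset.sum_nonneg fun a _ => hxnn a
    rcases eq_or_lt_of_le hts with ht0 | htpos
    · have hall : ∀ a, x a = 0 := by
        intro a
        have := (Finset.sum_eq_zero_iff_of_nonneg fun b _ => hxnn b).1 ht0.symm
        exact this a (Finset.mem_univ a)
      have hx0 : x = fun _ => (0:ℝ) := funext hall
      rw [hx0, esymm_one]
      simp only [Finset.sum_const_zero]
      rw [zero_pow (by omega : d ≠ 0)]
      have hz : ∀ m ∈ Finset.Icc 2 d, c m * (0:ℝ) ^ (d - m) * esymm n m (fun _ => (0:ℝ)) = 0 := by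
        intro m hm
        rw [esymm_zero_fun m (by have := (Finset.mem_Icc.1 hm).1; omega), mul_zero]
      rw [Finset.sum_congr rfl hz, Finset.sum_const_zero]
      norm_num
    · set t : ℝ := ∑ a, x a with ht
      have htne : t ≠ 0 := ne_of_gt htpos
      set y : Fin n → ℝ := fun a => t⁻¹ * x a with hy
      have hxy : x = fun a => t * y a := by
        funext a
        rw [hy]
        field_simp
      have hymem : y ∈ stdSimplex ℝ (Fin n) := by
        constructor
        · intro a
          exact mul_nonneg (by positivity) (hxnn a)
        · rw [hy, ← Finset.mul_sum, ← ht, inv_mul_cancel₀ htne]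
      clear_value y
      have hy1 : esymm n 1 y = 1 := by rw [esymm_one, hymem.2]
      obtain ⟨w, hw, hwmin⟩ := exists_min hn0 d c
      obtain ⟨k, hkmem, hGw⟩ := min_struct hn0 _ w le_rfl hw hwmin
      have hGy : (0:ℝ) ≤ G d c y := by
        have h1 : G d c w ≤ G d c y := isMinOn_iff.1 hwmin y hymem
        have h2 := hval k hkmem
        rw [hGw] at h1
        linarith
      have hexpr : c 1 * esymm n 1 x ^ d +
          ∑ j ∈ Finset.Icc 2 d, c j * esymm n 1 x ^ (d - j) * esymm n j x
          = t ^ d * G d c y := by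
        rw [hxy]
        simp only [esymm_smul, hy1]
        have hterm : ∀ j ∈ Finset.Icc 2 d,
            c j * (t ^ 1 * 1) ^ (d - j) * (t ^ j * esymm n j y)
              = t ^ d * (c j * esymm n j y) := by
          intro j hj
          have hjd := (Finset.mem_Icc.1 hj).2
          simp only [mul_one, pow_one]
          calc c j * t ^ (d - j) * (t ^ j * esymm n j y)
              = (t ^ (d - j) * t ^ j) * (c j * esymm n j y) := by ring
            _ = t ^ d * (c j * esymm n j y) := by
                rw [← pow_add, Nat.sub_add_cancel hjd]
        rw [Finset.sum_congr rfl hterm, ← Finset.mul_sum]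
        unfold G
        simp only [pow_one, mul_one]
        ring
      rw [hexpr]
      exact mul_nonneg (by positivity) hGy
end

section
/- Let n ≥ 3 and let a, b, c ∈ ℝ. The even symmetric sextic f(x) := a·p_2(x)³ + b·p_4(x)·p_2(x) + c·p_6(x) satisfies f(x) ≥ 0 for all x ∈ ℝ^n if and only if a + b/k + c/k² ≥ 0 for every k ∈ {1,…,n} (i.e., f evaluated at (p_2,p_4,p_6) = (1, 1/k, 1/k²) is nonnegative for k = 1,…,n). -/
open Finset

private lemma sum_update_two_pow {n : ℕ} (g : Fin n → ℝ) {i j : Fin n} (hij : i ≠ j)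
    (p q : ℝ) (e : ℕ) :
    ∑ l, (Function.update (Function.update g i p) j q l) ^ e
      = p ^ e + q ^ e + (∑ l, (g l) ^ e) - (g i) ^ e - (g j) ^ e := by
  classical
  have hrw : ∀ l, (Function.update (Function.update g i p) j q l) ^ e
      = Function.update (Function.update (fun l => (g l) ^ e) i (p ^ e)) j (q ^ e) l := by
    intro l
    simp only [Function.update_apply]
    split_ifs <;> rfl
  rw [Finset.sum_congr rfl fun l _ => hrw l]
  rw [Finset.sum_update_of_mem (Finset.mem_univ j)]
  have hi' : i ∈ (univ : Finset (Fin n)) \ {j} := by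
    simp [hij]
  rw [Finset.sum_update_of_mem hi']
  have h1 : ∑ x ∈ ((univ : Finset (Fin n)) \ {j}) \ {i}, (g x) ^ e
      = (∑ l, (g l) ^ e) - (g j) ^ e - (g i) ^ e := by
    rw [Finset.sum_sdiff_eq_sub (Finset.subset_sdiff.mpr ⟨Finset.subset_univ _, by
      simp only [Finset.disjoint_singleton]
      first
      | exact hij
      | exact hij.symm⟩)]
    rw [Finset.sum_sdiff_eq_sub (Finset.subset_univ _)]
    simp [Finset.sum_singleton]
  rw [h1]; ring

set_option maxHeartbeats 1000000 in
private lemma simplex_cubic_bound {n : ℕ} (A B lb : ℝ)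
    (hm : ∀ m : ℕ, 1 ≤ m → m ≤ n → lb ≤ A / (m : ℝ) ^ 2 + B / (m : ℝ))
    (u : Fin n → ℝ) (hu0 : ∀ i, 0 ≤ u i) (hu1 : ∑ i, u i = 1) :
    lb ≤ A * (∑ i, u i ^ 3) + B * (∑ i, u i ^ 2) := by
  classical
  set F : (Fin n → ℝ) → ℝ := fun v => A * (∑ i, v i ^ 3) + B * (∑ i, v i ^ 2) with hF
  have hFc : Continuous F := by fun_prop
  have hGc : Continuous (fun v : Fin n → ℝ => ∑ i, v i ^ 2) := by fun_prop
  have huS : u ∈ stdSimplex ℝ (Fin n) := ⟨hu0, hu1⟩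
  obtain ⟨w, hw, hwmin⟩ :=
    (isCompact_stdSimplex ℝ (Fin n)).exists_isMinOn ⟨u, huS⟩ hFc.continuousOn
  set M : Set (Fin n → ℝ) := stdSimplex ℝ (Fin n) ∩ {v | F v = F w} with hM
  have hMc : IsCompact M :=
    (isCompact_stdSimplex ℝ (Fin n)).inter_right (isClosed_eq hFc continuous_const)
  obtain ⟨z, hzmem, hzmin⟩ := hMc.exists_isMinOn ⟨w, hw, rfl⟩ hGc.continuousOn
  obtain ⟨⟨hz0, hz1⟩, hzF⟩ := hzmem
  have hwmin' := isMinOn_iff.mp hwmin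
  have hzmin' := isMinOn_iff.mp hzmin
  -- all positive coordinates of z are equal
  have key : ∀ i j : Fin n, i ≠ j → 0 < z i → 0 < z j → z i = z j := by
    intro i j hij hzi hzj
    by_contra hne
    set x := z i with hx
    set y := z j with hy
    set σ := x + y with hσdef
    set d := 3 * A * σ + 2 * B with hd
    set w1 := Function.update (Function.update z i (σ / 2)) j (σ / 2) with hw1
    set w2 := Function.update (Function.update z i σ) j 0 with hw2
    have hup : ∀ l p q, 0 ≤ p → 0 ≤ q →
        0 ≤ Function.update (Function.update z i p) j q l := by
      intro l p q hp hq
      simp only [Function.update_apply]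
      split_ifs <;> first | exact hq | exact hp | exact hz0 l
    have hsum1 : ∀ p q : ℝ, ∑ l, Function.update (Function.update z i p) j q l
        = p + q + 1 - x - y := by
      intro p q
      have := sum_update_two_pow z hij p q 1
      simpa [hz1] using this
    have hw1mem : w1 ∈ stdSimplex ℝ (Fin n) := by
      refine ⟨fun l => hup l _ _ (by positivity) (by positivity), ?_⟩
      rw [hw1, hsum1]; simp only [hσdef]; ring
    have hw2mem : w2 ∈ stdSimplex ℝ (Fin n) := by
      refine ⟨fun l => hup l _ _ (by positivity) le_rfl, ?_⟩
      rw [hw2, hsum1]; simp only [hσdef]; ring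
    have hFw1 : F w1 = F z - (x - y) ^ 2 * d / 4 := by
      simp only [hF, hw1]
      rw [sum_update_two_pow z hij _ _ 3, sum_update_two_pow z hij _ _ 2]
      simp only [hd, hσdef, ← hx, ← hy]
      ring
    have hFw2 : F w2 = F z + x * y * d := by
      simp only [hF, hw2]
      rw [sum_update_two_pow z hij _ _ 3, sum_update_two_pow z hij _ _ 2]
      simp only [hd, hσdef, ← hx, ← hy]
      ring
    have hxy2 : 0 < (x - y) ^ 2 := by
      have : x - y ≠ 0 := sub_ne_zero.mpr hne
      positivity
    have hFzw : F z = F w := hzF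
    rcases lt_trichotomy d 0 with hdlt | hdeq | hdgt
    · -- F w2 < F z : contradicts global min
      have h1 : F w ≤ F z + x * y * d := by
        rw [← hFw2]; exact hwmin' w2 hw2mem
      rw [hFzw] at h1
      have h2 : x * y * d < 0 := mul_neg_of_pos_of_neg (mul_pos hzi hzj) hdlt
      generalize ht : x * y * d = t at h1 h2
      linarith
    · -- d = 0 : w1 is also a minimizer but has smaller sum of squares
      have hw1M : w1 ∈ M := ⟨hw1mem, by rw [Set.mem_setOf_eq, hFw1, hdeq, hFzw]; ring⟩
      have h2 := hzmin' w1 hw1M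
      have hGw1 : (∑ l, w1 l ^ 2) = (∑ l, z l ^ 2) - (x - y) ^ 2 / 2 := by
        rw [hw1, sum_update_two_pow z hij _ _ 2]
        simp only [hσdef, ← hx, ← hy]
        ring
      rw [hGw1] at h2
      nlinarith
    · -- F w1 < F z : contradicts global min
      have h1 : F w ≤ F z - (x - y) ^ 2 * d / 4 := by
        rw [← hFw1]; exact hwmin' w1 hw1mem
      rw [hFzw] at h1
      have h2 : 0 < (x - y) ^ 2 * d := mul_pos hxy2 hdgt
      generalize ht : (x - y) ^ 2 * d = t at h1 h2
      linarith
  -- structure of z : m positive coordinates, each equal to 1/m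
  set P : Finset (Fin n) := univ.filter (fun i => 0 < z i) with hP
  have hfil : ∀ e : ℕ, 1 ≤ e → ∑ i ∈ P, z i ^ e = ∑ i, z i ^ e := by
    intro e he
    apply Finset.sum_filter_of_ne
    intro i _ hne
    rcases (hz0 i).lt_or_eq with h | h
    · exact h
    · exfalso; apply hne; rw [← h, zero_pow (by omega : e ≠ 0)]
  have hPsum : ∑ i ∈ P, z i = 1 := by
    have := hfil 1 le_rfl
    simp only [pow_one] at this
    rw [this, hz1]
  have hPne : P.Nonempty := by
    by_contra hemp
    rw [Finset.not_nonempty_iff_eq_empty] at hemp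
    rw [hemp, Finset.sum_empty] at hPsum
    norm_num at hPsum
  obtain ⟨i0, hi0⟩ := hPne
  have hi0pos : 0 < z i0 := by
    simpa [hP] using hi0
  set v := z i0 with hv
  have hall : ∀ i ∈ P, z i = v := by
    intro i hi
    have hipos : 0 < z i := by simpa [hP] using hi
    rcases eq_or_ne i i0 with rfl | hne
    · rfl
    · exact key i i0 hne hipos hi0pos
  set m := P.card with hmdef
  have hm1 : 1 ≤ m := Finset.card_pos.mpr ⟨i0, hi0⟩
  have hmn : m ≤ n := by
    have := Finset.card_filter_le (univ : Finset (Fin n)) (fun i => 0 < z i)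
    simpa using this
  have hmv : (m : ℝ) * v = 1 := by
    have : ∑ i ∈ P, z i = ∑ i ∈ P, v := Finset.sum_congr rfl hall
    rw [this, Finset.sum_const, nsmul_eq_mul] at hPsum
    exact hPsum
  have hmpos : (0 : ℝ) < m := by
    have : (1:ℝ) ≤ m := by exact_mod_cast hm1
    linarith
  have hveq : v = 1 / (m : ℝ) := by
    rw [eq_div_iff hmpos.ne', mul_comm]
    exact hmv
  have hsq : ∑ i, z i ^ 2 = (m : ℝ) * v ^ 2 := by
    rw [← hfil 2 (by norm_num)]
    rw [Finset.sum_congr rfl (fun i hi => by rw [hall i hi]), Finset.sum_const, nsmul_eq_mul]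
  have hcb : ∑ i, z i ^ 3 = (m : ℝ) * v ^ 3 := by
    rw [← hfil 3 (by norm_num)]
    rw [Finset.sum_congr rfl (fun i hi => by rw [hall i hi]), Finset.sum_const, nsmul_eq_mul]
  have hFz : F z = A / (m : ℝ) ^ 2 + B / (m : ℝ) := by
    have hmne : (m : ℝ) ≠ 0 := hmpos.ne'
    have e2 : (m : ℝ) * v ^ 2 = 1 / (m : ℝ) := by
      rw [hveq]; field_simp
    have e3 : (m : ℝ) * v ^ 3 = 1 / (m : ℝ) ^ 2 := by
      rw [hveq]; field_simp
    show A * (∑ i, z i ^ 3) + B * (∑ i, z i ^ 2) = _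
    rw [hsq, hcb, e2, e3, mul_one_div, mul_one_div]
  have h1 : lb ≤ F z := by
    rw [hFz]; exact hm m hm1 hmn
  have h2 : F z ≤ F u := by
    rw [hzF]; exact hwmin' u huS
  calc lb ≤ F z := h1
    _ ≤ F u := h2

set_option maxHeartbeats 1000000 in
/-- **Theorem 5.5 (Choi–Lam–Reznick).** An even symmetric sextic
`f = a·p₂³ + b·p₄·p₂ + c·p₆` in `n ≥ 3` variables is nonnegative on `ℝⁿ` if and only if
`f(1, 1/k, 1/k²) = a + b/k + c/k² ≥ 0` for every `k ∈ [n]`. -/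
theorem choi_lam_reznick_sextic_test (n : ℕ) (hn : 3 ≤ n) (a b c : ℝ) :
    (∀ x : Fin n → ℝ,
        0 ≤ a * (∑ j, x j ^ 2) ^ 3 + b * (∑ j, x j ^ 4) * (∑ j, x j ^ 2) +
          c * (∑ j, x j ^ 6)) ↔
      ∀ k ∈ Finset.Icc 1 n, 0 ≤ a + b / (k : ℝ) + c / (k : ℝ) ^ 2 := by
  constructor
  · -- nonnegativity implies the tests
    intro H k hk
    rw [Finset.mem_Icc] at hk
    obtain ⟨hk1, hkn⟩ := hk
    set x : Fin n → ℝ := fun j => if (j : ℕ) < k then 1 else 0 with hxdef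
    have hsum : ∀ e : ℕ, 1 ≤ e → ∑ j, x j ^ e = (k : ℝ) := by
      intro e he
      have h1 : ∀ j : Fin n, x j ^ e = if (j : ℕ) < k then 1 else 0 := by
        intro j
        simp only [hxdef]
        split_ifs
        · exact one_pow e
        · exact zero_pow (by omega)
      rw [Finset.sum_congr rfl fun j _ => h1 j]
      rw [Fin.sum_univ_eq_sum_range (fun j => if j < k then (1 : ℝ) else 0)]
      rw [Finset.sum_ite, Finset.sum_const, Finset.sum_const_zero]
      have h2 : (Finset.range n).filter (fun j => j < k) = Finset.range k := by
        ext j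
        simp only [Finset.mem_filter, Finset.mem_range]
        omega
      rw [h2, Finset.card_range]
      simp
    have hx := H x
    rw [hsum 2 (by norm_num), hsum 4 (by norm_num), hsum 6 (by norm_num)] at hx
    have hK : (0 : ℝ) < (k : ℝ) := by exact_mod_cast hk1
    have key : a + b / (k : ℝ) + c / (k : ℝ) ^ 2
        = (a * (k : ℝ) ^ 3 + b * (k : ℝ) * (k : ℝ) + c * (k : ℝ)) / (k : ℝ) ^ 3 := by
      field_simp
    rw [key]
    exact div_nonneg hx (by positivity)
  · -- the tests imply nonnegativity
    intro h x
    have hsq : ∀ j, (0 : ℝ) ≤ x j ^ 2 := fun j => sq_nonneg _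
    set S : ℝ := ∑ j, x j ^ 2 with hSdef
    have hS0 : 0 ≤ S := Finset.sum_nonneg fun j _ => hsq j
    rcases hS0.eq_or_lt with hS | hS
    · -- all coordinates vanish
      have hz : ∀ j ∈ Finset.univ, x j ^ 2 = 0 :=
        fun j _ => le_antisymm (hS ▸ Finset.single_le_sum (fun j _ => hsq j) (Finset.mem_univ j)) (hsq j)
      have hz' : ∀ j : Fin n, x j = 0 := fun j => by
        have := hz j (Finset.mem_univ j); exact pow_eq_zero_iff (by norm_num) |>.mp this
      rw [← hS]
      simp [hz']
    · -- normalize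
      have hSne : S ≠ 0 := hS.ne'
      set u : Fin n → ℝ := fun j => x j ^ 2 / S with hudef
      have hu0 : ∀ j, 0 ≤ u j := fun j => div_nonneg (hsq j) hS0
      have hu1 : ∑ j, u j = 1 := by
        rw [hudef]
        rw [← Finset.sum_div, ← hSdef, div_self hSne]
      set s : ℝ := ∑ j, u j ^ 2 with hsdef
      set t : ℝ := ∑ j, u j ^ 3 with htdef
      have hs4 : ∑ j, x j ^ 4 = S ^ 2 * s := by
        rw [hsdef, Finset.mul_sum]
        apply Finset.sum_congr rfl
        intro j _
        simp only [hudef]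
        field_simp
      have hs6 : ∑ j, x j ^ 6 = S ^ 3 * t := by
        rw [htdef, Finset.mul_sum]
        apply Finset.sum_congr rfl
        intro j _
        simp only [hudef]
        field_simp
      have hexp : a * S ^ 3 + b * (S ^ 2 * s) * S + c * (S ^ 3 * t)
          = S ^ 3 * (a + b * s + c * t) := by ring
      rw [hs4, hs6, hexp]
      have hcore : 0 ≤ a + b * s + c * t := by
        -- basic facts about s
        have hu_le1 : ∀ j, u j ≤ 1 := by
          intro j
          rw [← hu1]
          exact Finset.single_le_sum (fun i _ => hu0 i) (Finset.mem_univ j)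
        have hs_le1 : s ≤ 1 := by
          rw [hsdef, ← hu1]
          apply Finset.sum_le_sum
          intro i _
          nlinarith [hu0 i, hu_le1 i]
        have hs_ge : 1 ≤ (n : ℝ) * s := by
          have := sq_sum_le_card_mul_sum_sq (s := (Finset.univ : Finset (Fin n))) (f := u)
          rw [hu1, ← hsdef] at this
          simpa using this
        have hs_pos : 0 < s := by
          have hn' : (0:ℝ) < n := by positivity
          nlinarith
        -- choose k
        set k : ℕ := min (⌊1 / s⌋₊) (n - 1) with hkdef
        have hk1 : 1 ≤ k := by
          have h1 : 1 ≤ ⌊1 / s⌋₊ := by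
            apply Nat.le_floor
            rw [Nat.cast_one, le_div_iff₀ hs_pos, one_mul]
            exact hs_le1
          have h2 : 1 ≤ n - 1 := by omega
          omega
        have hkn : k + 1 ≤ n := by
          have : k ≤ n - 1 := min_le_right _ _
          omega
        have hK1 : (1:ℝ) ≤ (k:ℝ) := by exact_mod_cast hk1
        have hKpos : (0:ℝ) < (k:ℝ) := by linarith
        have hupper : (k : ℝ) * s ≤ 1 := by
          have h1 : (k : ℝ) ≤ ⌊1 / s⌋₊ := by
            exact_mod_cast min_le_left (⌊1 / s⌋₊) (n - 1)
          have h2 : (⌊1 / s⌋₊ : ℝ) ≤ 1 / s := Nat.floor_le (by positivity)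
          have := h1.trans h2
          rw [le_div_iff₀ hs_pos] at this
          linarith
        have hlower : 1 ≤ ((k : ℝ) + 1) * s := by
          rcases le_total (⌊1 / s⌋₊) (n - 1) with hc | hc
          · have hkeq : k = ⌊1 / s⌋₊ := min_eq_left hc
            have h1 : 1 / s < (⌊1 / s⌋₊ : ℝ) + 1 := Nat.lt_floor_add_one _
            rw [div_lt_iff₀ hs_pos] at h1
            rw [hkeq]
            linarith
          · have hkeq : k = n - 1 := min_eq_right hc
            have h1 : ((k : ℝ) + 1) = (n : ℝ) := by
              rw [hkeq]
              have : ((n - 1 : ℕ) : ℝ) = (n : ℝ) - 1 := by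
                have : 1 ≤ n := by omega
                push_cast [this]; ring
              rw [this]; ring
            rw [h1]
            exact hs_ge
        -- the two chord inequalities from the simplex lemma
        have hchordA : -1 ≤ ((k:ℝ) * ((k:ℝ)+1)) * t + (-(2*(k:ℝ)+1)) * s := by
          apply simplex_cubic_bound _ _ _ _ u hu0 hu1
          intro m hm1 hmn
          have hM1 : (1:ℝ) ≤ (m:ℝ) := by exact_mod_cast hm1
          have hMpos : (0:ℝ) < (m:ℝ) := by linarith
          have hiden : ((k:ℝ) * ((k:ℝ)+1)) / (m:ℝ)^2 + (-(2*(k:ℝ)+1)) / (m:ℝ) + 1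
              = ((k:ℝ) - m) * ((k:ℝ) + 1 - m) / (m:ℝ)^2 := by
            field_simp
            ring
          have hnum : 0 ≤ ((k:ℝ) - m) * ((k:ℝ) + 1 - m) := by
            rcases le_or_gt m k with hmk | hmk
            · have h1 : (m:ℝ) ≤ (k:ℝ) := by exact_mod_cast hmk
              exact mul_nonneg (by linarith) (by linarith)
            · have h1 : (k:ℝ) + 1 ≤ (m:ℝ) := by exact_mod_cast hmk
              have h2 : 0 ≤ ((m:ℝ) - ((k:ℝ)+1)) * ((m:ℝ) - (k:ℝ)) :=
                mul_nonneg (by linarith) (by linarith)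
              linarith [h2]
          linarith [div_nonneg hnum (sq_nonneg (m:ℝ)), hiden]
        have hchordB : 1 ≤ (-(n:ℝ)) * t + ((n:ℝ)+1) * s := by
          apply simplex_cubic_bound _ _ _ _ u hu0 hu1
          intro m hm1 hmn
          have hM1 : (1:ℝ) ≤ (m:ℝ) := by exact_mod_cast hm1
          have hMn : (m:ℝ) ≤ (n:ℝ) := by exact_mod_cast hmn
          have hMpos : (0:ℝ) < (m:ℝ) := by linarith
          have hiden : (-(n:ℝ)) / (m:ℝ)^2 + ((n:ℝ)+1) / (m:ℝ) - 1
              = ((m:ℝ) - 1) * ((n:ℝ) - m) / (m:ℝ)^2 := by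
            field_simp
            ring
          have hnum : 0 ≤ ((m:ℝ) - 1) * ((n:ℝ) - m) :=
            mul_nonneg (by linarith) (by linarith)
          linarith [div_nonneg hnum (sq_nonneg (m:ℝ)), hiden]
        -- tests at the needed points
        have test : ∀ j : ℕ, 1 ≤ j → j ≤ n → 0 ≤ a * (j:ℝ)^2 + b * (j:ℝ) + c := by
          intro j hj1 hjn
          have hJ : (0:ℝ) < (j:ℝ) := by exact_mod_cast hj1
          have := h j (Finset.mem_Icc.mpr ⟨hj1, hjn⟩)
          have hmul : (a + b / (j:ℝ) + c / (j:ℝ)^2) * (j:ℝ)^2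
              = a * (j:ℝ)^2 + b * (j:ℝ) + c := by
            field_simp
          linarith [mul_nonneg this (sq_nonneg (j:ℝ)), hmul]
        rcases le_or_gt 0 c with hc | hc
        · -- use the lower chord for k, k+1
          set K : ℝ := (k : ℝ) with hKdef
          have T1 : 0 ≤ a * K^2 + b * K + c := test k hk1 (by omega)
          have T2 : 0 ≤ a * (K+1)^2 + b * (K+1) + c := by
            have := test (k+1) (by omega) hkn
            push_cast at this
            convert this using 2 <;> push_cast <;> ring
          have h1 : 0 ≤ c * (K * (K+1) * t - (2*K+1) * s + 1) := by
            apply mul_nonneg hc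
            linarith [hchordA]
          have h2 : 0 ≤ ((K+1) * s - 1) * (a * K^2 + b * K + c) :=
            mul_nonneg (by linarith [hlower]) T1
          have h3 : 0 ≤ (1 - K * s) * (a * (K+1)^2 + b * (K+1) + c) :=
            mul_nonneg (by linarith [hupper]) T2
          have hkey : K * (K+1) * (a + b * s + c * t)
              = c * (K * (K+1) * t - (2*K+1) * s + 1)
                + (K+1) * (((K+1) * s - 1) * (a * K^2 + b * K + c))
                + K * ((1 - K * s) * (a * (K+1)^2 + b * (K+1) + c)) := by
            ring
          have hKK : 0 < K * (K+1) := mul_pos hKpos (by linarith)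
          have hfinal : 0 ≤ K * (K+1) * (a + b * s + c * t) := by
            rw [hkey]
            have hh2 : 0 ≤ (K+1) * (((K+1) * s - 1) * (a * K^2 + b * K + c)) :=
              mul_nonneg (by linarith) h2
            have hh3 : 0 ≤ K * ((1 - K * s) * (a * (K+1)^2 + b * (K+1) + c)) :=
              mul_nonneg (by linarith) h3
            linarith
          have := div_nonneg hfinal hKK.le
          rwa [mul_div_cancel_left₀ _ hKK.ne'] at this
        · -- use the upper chord between 1/n and 1
          set N : ℝ := (n : ℝ) with hNdef
          have hN3 : (3:ℝ) ≤ N := by rw [hNdef]; exact_mod_cast hn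
          have T1 : 0 ≤ a + b + c := by
            have := test 1 le_rfl (by omega)
            push_cast at this
            linarith
          have Tn : 0 ≤ a * N^2 + b * N + c := test n (by omega) le_rfl
          have h1 : 0 ≤ (-c) * ((N+1) * s - 1 - N * t) := by
            apply mul_nonneg (by linarith)
            linarith [hchordB]
          have h2 : 0 ≤ (N * s - 1) * (a + b + c) :=
            mul_nonneg (by linarith [hs_ge]) T1
          have h3 : 0 ≤ (1 - s) * (a * N^2 + b * N + c) :=
            mul_nonneg (by linarith [hs_le1]) Tn
          have hkey : N^2 * (N-1) * (a + b * s + c * t)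
              = N * (N-1) * ((-c) * ((N+1) * s - 1 - N * t))
                + N^2 * ((N * s - 1) * (a + b + c))
                + N * ((1 - s) * (a * N^2 + b * N + c)) := by
            ring
          have hNN : 0 < N^2 * (N-1) := by
            have hN1 : (0:ℝ) < N - 1 := by linarith
            have hN2 : (0:ℝ) < N ^ 2 := by nlinarith
            exact mul_pos hN2 hN1
          have hfinal : 0 ≤ N^2 * (N-1) * (a + b * s + c * t) := by
            rw [hkey]
            have hh1 : 0 ≤ N * (N-1) * ((-c) * ((N+1) * s - 1 - N * t)) :=
              mul_nonneg (mul_nonneg (by linarith) (by linarith)) h1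
            have hh2 : 0 ≤ N^2 * ((N * s - 1) * (a + b + c)) :=
              mul_nonneg (by positivity) h2
            have hh3 : 0 ≤ N * ((1 - s) * (a * N^2 + b * N + c)) :=
              mul_nonneg (by linarith) h3
            linarith
          have := div_nonneg hfinal hNN.le
          rwa [mul_div_cancel_left₀ _ hNN.ne'] at this
      positivity
end

section
/- For all n ≥ d ≥ 4, the set Π_{n,d} is not contained in conv{(1/k, 1/k², …, 1/k^{d-1}) : k = 1,…,n}. Moreover, Π_d is not contained in conv({(0,…,0)} ∪ {(1/k, 1/k², …, 1/k^{d-1}) : k ∈ ℕ, k ≥ 1}). -/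
lemma witness_mem (d n : ℕ) (hn : 2 ≤ n) :
    (fun i : Fin (d-1) => (3/4:ℝ)^((i:ℕ)+2) + (1/4:ℝ)^((i:ℕ)+2)) ∈
      (fun (x : Fin n → ℝ) (i : Fin (d-1)) => ∑ j, x j ^ ((i:ℕ)+2)) '' stdSimplex ℝ (Fin n) := by
  set j0 : Fin n := ⟨0, by omega⟩
  set j1 : Fin n := ⟨1, by omega⟩
  have hne : j0 ≠ j1 := by simp [j0, j1, Fin.ext_iff]
  refine ⟨fun j => if j = j0 then 3/4 else if j = j1 then 1/4 else 0, ⟨?_, ?_⟩, ?_⟩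
  · intro j
    dsimp only
    split_ifs <;> norm_num
  · have key : ∀ j : Fin n,
        (if j = j0 then (3/4:ℝ) else if j = j1 then 1/4 else 0)
          = (if j = j0 then (3/4:ℝ) else 0) + (if j = j1 then (1/4:ℝ) else 0) := by
      intro j
      by_cases h0 : j = j0 <;> by_cases h1 : j = j1 <;>
        simp_all [hne]
    simp only [key, Finset.sum_add_distrib, Finset.sum_ite_eq', Finset.mem_univ, if_true]
    norm_num
  · funext i
    have key : ∀ j : Fin n,
        (if j = j0 then (3/4:ℝ) else if j = j1 then 1/4 else 0) ^ ((i:ℕ)+2)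
          = (if j = j0 then (3/4:ℝ)^((i:ℕ)+2) else 0) + (if j = j1 then (1/4:ℝ)^((i:ℕ)+2) else 0) := by
      intro j
      by_cases h0 : j = j0 <;> by_cases h1 : j = j1 <;>
        simp_all [hne, zero_pow]
    simp only [key, Finset.sum_add_distrib, Finset.sum_ite_eq', Finset.mem_univ, if_true]

/-- **Proposition 5.7.** For all `n ≥ d ≥ 4`, the Vandermonde cell `Π_{n,d}` is not
contained in `conv{(1/k,…,1/k^{d-1}) : k ∈ [n]}`; moreover the limit cell `Π_d` is not
contained in `conv({0} ∪ {(1/k,…,1/k^{d-1}) : k ≥ 1})`. -/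
theorem vandermonde_cell_not_in_convex_hull_of_moment_points (d : ℕ) (hd : 4 ≤ d) :
    (∀ n : ℕ, d ≤ n →
      ¬ ((fun (x : Fin n → ℝ) (i : Fin (d - 1)) => ∑ j, x j ^ ((i : ℕ) + 2)) ''
            stdSimplex ℝ (Fin n) ⊆
          convexHull ℝ {v : Fin (d - 1) → ℝ | ∃ k ∈ Finset.Icc 1 n, v = momentPt d k})) ∧
    ¬ (closure (⋃ n : ℕ, ⋃ (_ : d ≤ n),
          (fun (x : Fin n → ℝ) (i : Fin (d - 1)) => ∑ j, x j ^ ((i : ℕ) + 2)) ''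
            stdSimplex ℝ (Fin n)) ⊆
        convexHull ℝ
          (insert (0 : Fin (d - 1) → ℝ)
            {v : Fin (d - 1) → ℝ | ∃ k : ℕ, 1 ≤ k ∧ v = momentPt d k})) := by
  set e0 : Fin (d-1) := ⟨0, by omega⟩
  set e1 : Fin (d-1) := ⟨1, by omega⟩
  set e2 : Fin (d-1) := ⟨2, by omega⟩
  set L : (Fin (d-1) → ℝ) → ℝ := fun v => -(1/2)*v e0 + (3/2)*v e1 - v e2 with hL
  have hlin : IsLinearMap ℝ L := by
    constructor
    · intro a b; simp [hL]; ring
    · intro c a; simp [hL]; ring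
  have hhalf : Convex ℝ {v | L v ≤ 0} := convex_halfSpace_le hlin 0
  have hmom : ∀ k : ℕ, 1 ≤ k → L (momentPt d k) ≤ 0 := by
    intro k hk
    have hk1 : (1:ℝ) ≤ (k:ℝ) := by exact_mod_cast hk
    have hkpos : (0:ℝ) < (k:ℝ) := by linarith
    simp only [hL, momentPt, e0, e1, e2]
    rcases eq_or_lt_of_le hk with h1 | h2
    · rw [← h1]; norm_num
    · have hk2 : (2:ℝ) ≤ (k:ℝ) := by exact_mod_cast h2
      have key : -(1/2)*(1/(k:ℝ))^(0+1) + 3/2*(1/(k:ℝ))^(1+1) - (1/(k:ℝ))^(2+1)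
          = -(((k:ℝ)-1)*((k:ℝ)-2))/(2*(k:ℝ)^3) := by
        have hk0 : (k:ℝ) ≠ 0 := hkpos.ne'
        field_simp
        have hu : (k:ℝ) * (k:ℝ)⁻¹ = 1 := mul_inv_cancel₀ hk0
        linear_combination (-(k:ℝ)^2 + 3*(k:ℝ)*((k:ℝ)*(k:ℝ)⁻¹+1) - 2*(((k:ℝ)*(k:ℝ)⁻¹)^2+(k:ℝ)*(k:ℝ)⁻¹+1)) * hu
      rw [key]
      exact div_nonpos_of_nonpos_of_nonneg (by nlinarith) (by positivity)
  -- the witness point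
  set y : Fin (d-1) → ℝ := fun i => (3/4:ℝ)^((i:ℕ)+2) + (1/4:ℝ)^((i:ℕ)+2) with hy
  have hLy : 0 < L y := by
    simp only [hL, hy, e0, e1, e2]
    norm_num
  constructor
  · intro n hn hsub
    have hmem := witness_mem d n (by omega)
    have := hsub hmem
    have hsub2 : convexHull ℝ {v : Fin (d-1) → ℝ | ∃ k ∈ Finset.Icc 1 n, v = momentPt d k}
        ⊆ {v | L v ≤ 0} := by
      apply convexHull_min _ hhalf
      rintro v ⟨k, hk, rfl⟩
      exact hmom k (Finset.mem_Icc.mp hk).1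
    have := hsub2 this
    simp only [Set.mem_setOf_eq] at this
    linarith
  · intro hsub
    have hmem : y ∈ (⋃ n : ℕ, ⋃ (_ : d ≤ n),
        (fun (x : Fin n → ℝ) (i : Fin (d - 1)) => ∑ j, x j ^ ((i : ℕ) + 2)) ''
          stdSimplex ℝ (Fin n)) := by
      refine Set.mem_iUnion.mpr ⟨d, Set.mem_iUnion.mpr ⟨le_refl d, ?_⟩⟩
      exact witness_mem d d (by omega)
    have := hsub (subset_closure hmem)
    have hsub2 : convexHull ℝ (insert (0 : Fin (d-1) → ℝ)
        {v : Fin (d-1) → ℝ | ∃ k : ℕ, 1 ≤ k ∧ v = momentPt d k}) ⊆ {v | L v ≤ 0} := by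
      apply convexHull_min _ hhalf
      rintro v (rfl | ⟨k, hk, rfl⟩)
      · simp [hL]
      · exact hmom k hk
    have := hsub2 this
    simp only [Set.mem_setOf_eq] at this
    linarith
end
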